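/- arXiv:math/0503573 — 9 statements merged into one kernel-verified Lean document; each statement's English description precedes it below -/
import Mathlib

section
/- Let F be a field and E a finite Galois extension of F with Galois group Gal(E/F). Let A be an n×m matrix with entries in E. Then there exists a nonzero λ ∈ E such that λA has all its entries in F if and only if for every σ ∈ Gal(E/F) there exists μ_σ ∈ E with A^σ = μ_σ · A (where A^σ denotes entrywise application of σ). -/
/-!
If `λ a i ∈ F` for all `i`, then applying `σ` gives `σ (a i) = (λ / σ λ) · a i`. Conversely, if some
`a i₀ ≠ 0`, take `λ = (a i₀)⁻¹`: each quotient `a i / a i₀` is fixed by every `σ`, since the common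
factor `μ_σ` cancels, hence lies in `F` by Galois theory.
-/

namespace AlgEquiv

variable {F E : Type*} [Field F] [Field E] [Algebra F E]

theorem apply_eq_div_mul_of_mul_mem_range (σ : E ≃ₐ[F] E) {l x : E} (hl : l ≠ 0)
    (hx : l * x ∈ (algebraMap F E).range) : σ x = l / σ l * x := by
  obtain ⟨c, hc⟩ := hx
  have hσ : σ l * σ x = l * x := by rw [← map_mul, ← hc, σ.commutes]
  rw [div_mul_eq_mul_div, eq_div_iff (map_ne_zero σ |>.mpr hl), mul_comm, hσ]

theorem apply_div_eq_self_of_apply_eq_mul (σ : E ≃ₐ[F] E) {μ x y : E} (hx : σ x = μ * x)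
    (hy : σ y = μ * y) (hy0 : y ≠ 0) : σ (x / y) = x / y := by
  have hμ : μ ≠ 0 := left_ne_zero_of_mul (hy ▸ (map_ne_zero σ).mpr hy0)
  rw [map_div₀, hx, hy, mul_div_mul_left _ _ hμ]

end AlgEquiv

theorem exists_mul_mem_range_iff_forall_exists_apply_eq_mul {F E ι : Type*} [Field F] [Field E]
    [Algebra F E] [IsGalois F E] (a : ι → E) :
    (∃ l : E, l ≠ 0 ∧ ∀ i, l * a i ∈ (algebraMap F E).range) ↔
      ∀ σ : E ≃ₐ[F] E, ∃ μ : E, ∀ i, σ (a i) = μ * a i := by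
  constructor
  · rintro ⟨l, hl, hla⟩ σ
    exact ⟨l / σ l, fun i ↦ σ.apply_eq_div_mul_of_mul_mem_range hl (hla i)⟩
  · intro h
    by_cases ha : ∀ i, a i = 0
    · exact ⟨1, one_ne_zero, fun i ↦ ⟨0, by simp [ha i]⟩⟩
    obtain ⟨i₀, hi₀⟩ := not_forall.mp ha
    refine ⟨(a i₀)⁻¹, inv_ne_zero hi₀, fun i ↦ ?_⟩
    rw [inv_mul_eq_div]
    refine (InfiniteGalois.mem_range_algebraMap_iff_fixed _).mpr fun σ ↦ ?_
    obtain ⟨μ, hμ⟩ := h σ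
    exact σ.apply_div_eq_self_of_apply_eq_mul (hμ i) (hμ i₀) hi₀

theorem exists_scalar_entries_in_base_iff_general
    (F E : Type*) [Field F] [Field E] [Algebra F E]
    [IsGalois F E]
    (n m : ℕ) (A : Matrix (Fin n) (Fin m) E) :
    (∃ l : E, l ≠ 0 ∧ ∀ i j, l * A i j ∈ (algebraMap F E).range) ↔
      (∀ σ : E ≃ₐ[F] E, ∃ μ : E, ∀ i j, σ (A i j) = μ * A i j) := by
  simpa only [Prod.forall] using
    exists_mul_mem_range_iff_forall_exists_apply_eq_mul (F := F) fun p : Fin n × Fin m ↦ A p.1 p.2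

/-- Let `F` be a field and `E` a finite Galois extension of `F`.
Let `A` be an `n × m` matrix over `E`. There exists a nonzero `λ ∈ E` such that
`λ • A` has all entries in (the image of) `F` iff for every `σ ∈ Gal(E/F)` there is
`μ_σ ∈ E` with `A^σ = μ_σ • A` (entrywise application of `σ`). -/
theorem exists_scalar_entries_in_base_iff
    (F E : Type*) [Field F] [Field E] [Algebra F E]
    [FiniteDimensional F E] [IsGalois F E]
    (n m : ℕ) (A : Matrix (Fin n) (Fin m) E) :
    (∃ l : E, l ≠ 0 ∧ ∀ i j, l * A i j ∈ (algebraMap F E).range) ↔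
      (∀ σ : E ≃ₐ[F] E, ∃ μ : E, ∀ i j, σ (A i j) = μ * A i j) :=
  exists_scalar_entries_in_base_iff_general F E n m A
end

section
/- Let q be an even prime power. For r ∈ F_q define S_r = {x ∈ F_{q^2} : Tr_{F_{q^2}/F_q}(x) = r} ∩ {x² + x : x ∈ F_{q^2}} — equivalently S_r is the image of G_r = {x : x^q + x = r} under the map F(x) = x² + x. Then F maps G_r two-to-one onto S_r; in particular |S_r| = q/2, the sets S_r (r ∈ F_q) partition the set T_0 of elements of F_{q^2} of absolute trace 0, and S_r + S_s = S_{r+s}. -/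
open Pointwise Polynomial

section ASaux

variable {K : Type*} [Field K] [Fintype K]

lemma as_card_roots_le (p : K[X]) (hp : p ≠ 0) :
    {x : K | p.eval x = 0}.ncard ≤ p.natDegree := by
  classical
  have h : {x : K | p.eval x = 0} = ↑p.roots.toFinset := by
    ext x
    simp [Polynomial.mem_roots, hp, Polynomial.IsRoot]
  rw [h, Set.ncard_coe_finset]
  exact (Multiset.toFinset_card_le _).trans (Polynomial.card_roots' p)

lemma as_ker_mul_range (f : K →+ K) :
    Nat.card f.ker * Nat.card f.range = Fintype.card K := by
  have h1 := AddSubgroup.card_eq_card_quotient_mul_card_addSubgroup f.ker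
  have h2 : Nat.card (K ⧸ f.ker) = Nat.card f.range :=
    Nat.card_congr (QuotientAddGroup.quotientKerEquivRange f).toEquiv
  rw [Nat.card_eq_fintype_card, h2] at h1
  rw [h1, mul_comm]

lemma as_card_pow_add_le (n : ℕ) (hn : 2 ≤ n) :
    {x : K | x ^ n + x = 0}.ncard ≤ n := by
  have hset : {x : K | x ^ n + x = 0} = {x : K | (X ^ n + X : K[X]).eval x = 0} := by
    simp
  have hp0 : (X ^ n + X : K[X]) ≠ 0 := by
    intro h
    have hc := congrArg (fun p : K[X] => p.coeff n) h
    have hn1 : ¬ (1 = n) := by omega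
    simp [Polynomial.coeff_X_pow, Polynomial.coeff_X, hn1] at hc
  have hdeg : (X ^ n + X : K[X]).natDegree ≤ n := by
    refine (Polynomial.natDegree_add_le _ _).trans ?_
    simp [Polynomial.natDegree_X_pow, Polynomial.natDegree_X]
    omega
  rw [hset]
  exact (as_card_roots_le _ hp0).trans hdeg

lemma as_card_trace_le (m : ℕ) (hm : 0 < m) :
    {x : K | ∑ i ∈ Finset.range m, x ^ 2 ^ i = 0}.ncard ≤ 2 ^ (m - 1) := by
  classical
  set P : K[X] := ∑ i ∈ Finset.range m, X ^ 2 ^ i with hP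
  have hset : {x : K | ∑ i ∈ Finset.range m, x ^ 2 ^ i = 0}
      = {x : K | P.eval x = 0} := by
    ext x
    simp [hP, Polynomial.eval_finset_sum]
  have hp0 : P ≠ 0 := by
    intro h
    have hc := congrArg (fun p : K[X] => p.coeff (2 ^ (m - 1))) h
    simp only [hP, Polynomial.finset_sum_coeff, Polynomial.coeff_X_pow,
      Polynomial.coeff_zero] at hc
    have hiff : ∀ i, (2 ^ (m - 1) = 2 ^ i) ↔ (i = m - 1) := by
      intro i
      constructor
      · intro h'
        exact (Nat.pow_right_injective (le_refl 2) h'.symm)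
      · rintro rfl; rfl
    rw [Finset.sum_congr rfl (fun i _ => by rw [if_congr (hiff i) rfl rfl])] at hc
    rw [Finset.sum_ite_eq' (Finset.range m) (m - 1) (fun _ => (1 : K))] at hc
    have hmem : m - 1 ∈ Finset.range m := Finset.mem_range.mpr (by omega)
    rw [if_pos hmem] at hc
    exact one_ne_zero hc
  have hdeg : P.natDegree ≤ 2 ^ (m - 1) := by
    refine Polynomial.natDegree_sum_le_of_forall_le _ _ (fun i hi => ?_)
    rw [Polynomial.natDegree_X_pow]
    exact Nat.pow_le_pow_right (by norm_num) (by
      have := Finset.mem_range.mp hi; omega)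
  rw [hset]
  exact (as_card_roots_le _ hp0).trans hdeg

end ASaux

/-- Let `q = 2^r` be an even prime power and `K = F_{q²}`.
For `s ∈ F_q` let `G_s = {x ∈ K : x^q + x = s}` and let `S_s` be the image of `G_s`
under `F(x) = x² + x`. Then `F` maps `G_s` two-to-one onto `S_s`; in particular
`|S_s| = q/2`; the sets `S_s` (for `s ∈ F_q`) partition the set `T₀` of elements of
`K` of absolute trace `0` (absolute trace being `x ↦ ∑_{i<2r} x^{2^i}`), and
`S_s + S_t = S_{s+t}`. -/
theorem artin_schreier_image_of_Gr
    (q r : ℕ) (hr : 0 < r) (hq : q = 2 ^ r)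
    (K : Type*) [Field K] [Fintype K] (hK : Fintype.card K = q ^ 2)
    (G S : K → Set K)
    (hG : ∀ s, G s = {x : K | x ^ q + x = s})
    (hS : ∀ s, S s = (fun x : K => x ^ 2 + x) '' G s) :
    (∀ s : K, s ^ q = s → ∀ y ∈ S s, {x ∈ G s | x ^ 2 + x = y}.ncard = 2) ∧
    (∀ s : K, s ^ q = s → (S s).ncard = q / 2) ∧
    ((⋃ s ∈ {t : K | t ^ q = t}, S s) =
      {x : K | ∑ i ∈ Finset.range (2 * r), x ^ 2 ^ i = 0}) ∧
    (∀ s t : K, s ^ q = s → t ^ q = t → s ≠ t → Disjoint (S s) (S t)) ∧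
    (∀ s t : K, s ^ q = s → t ^ q = t → S s + S t = S (s + t)) := by
  classical
  have hq2 : 2 ≤ q := by
    rw [hq]
    calc (2:ℕ) = 2 ^ 1 := (pow_one 2).symm
    _ ≤ 2 ^ r := Nat.pow_le_pow_right (by norm_num) hr
  have hcard : Fintype.card K = 2 ^ (2 * r) := by
    rw [hK, hq, ← pow_mul, mul_comm]
  -- characteristic 2
  have hchar2 : ringChar K = 2 := by
    have hdvd : ringChar K ∣ 2 ^ (2 * r) :=
      ringChar.dvd (by rw [← hcard]; exact FiniteField.cast_card_eq_zero K)
    have hp : (ringChar K).Prime := by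
      haveI := ringChar.charP K
      exact CharP.char_is_prime K (ringChar K)
    have := hp.dvd_of_dvd_pow hdvd
    exact (Nat.prime_dvd_prime_iff_eq hp Nat.prime_two).mp this
  haveI hc2 : CharP K 2 := hchar2 ▸ ringChar.charP K
  have hpow2 : ∀ x : K, x ^ q ^ 2 = x := fun x => by
    rw [← hK]; exact FiniteField.pow_card x
  have hfrobq : ∀ x y : K, (x + y) ^ q = x ^ q + y ^ q := fun x y => by
    rw [hq]; exact add_pow_char_pow x y 2 r
  have hsq : ∀ x y : K, (x + y) ^ 2 = x ^ 2 + y ^ 2 := fun x y => CharTwo.add_sq x y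
  have h2z : (2 : K) = 0 := CharTwo.two_eq_zero
  -- the additive maps
  set φ : K →+ K :=
    { toFun := fun x => x ^ q + x
      map_zero' := by simp [zero_pow (by omega : q ≠ 0)]
      map_add' := fun x y => by
        show (x + y) ^ q + (x + y) = (x ^ q + x) + (y ^ q + y)
        rw [hfrobq]; ring } with hφ
  set F : K →+ K :=
    { toFun := fun x => x ^ 2 + x
      map_zero' := by simp
      map_add' := fun x y => by
        show (x + y) ^ 2 + (x + y) = (x ^ 2 + x) + (y ^ 2 + y)
        rw [hsq]; ring } with hF
  have hφapp : ∀ x : K, φ x = x ^ q + x := fun _ => rfl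
  have hFapp : ∀ x : K, F x = x ^ 2 + x := fun _ => rfl
  have hfix : ∀ s : K, s ^ q = s ↔ φ s = 0 := by
    intro s
    rw [hφapp, CharTwo.add_eq_iff_eq_add, zero_add]
  -- kernel of φ
  have hkerφ_set : (φ.ker : Set K) = {x : K | x ^ q + x = 0} := by
    ext x; simp [AddMonoidHom.mem_ker, hφapp]
  have hkerφ_le : Nat.card φ.ker ≤ q := by
    have h := as_card_pow_add_le (K := K) q hq2
    rw [← hkerφ_set] at h
    rw [show (Nat.card φ.ker : ℕ) = Nat.card (φ.ker : Set K) from rfl,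
      Nat.card_coe_set_eq]
    exact h
  have hφφ : ∀ x : K, φ (φ x) = 0 := by
    intro x
    rw [hφapp, hφapp, hfrobq, ← pow_mul, ← sq, hpow2]
    rw [show (x + x ^ q + (x ^ q + x) : K) = (x + x ^ q) * 2 by ring, h2z, mul_zero]
  have hrange_sub : (φ.range : Set K) ⊆ (φ.ker : Set K) := by
    rintro y ⟨x, rfl⟩
    exact AddMonoidHom.mem_ker.mpr (hφφ x)
  have hmulφ := as_ker_mul_range φ
  rw [hcard] at hmulφ
  have hrangeφ_le : Nat.card φ.range ≤ Nat.card φ.ker := by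
    rw [show (Nat.card φ.ker : ℕ) = Nat.card (φ.ker : Set K) from rfl,
      show (Nat.card φ.range : ℕ) = Nat.card (φ.range : Set K) from rfl,
      Nat.card_coe_set_eq, Nat.card_coe_set_eq]
    exact Set.ncard_le_ncard hrange_sub (Set.toFinite _)
  have hq2r : 2 ^ (2 * r) = q * q := by rw [hq, ← pow_add]; ring_nf
  have hkerφ_card : Nat.card φ.ker = q := by
    have hab : Nat.card φ.ker * Nat.card φ.range = q * q := by rw [hmulφ, hq2r]
    by_contra hne
    have h : Nat.card φ.ker < q := lt_of_le_of_ne hkerφ_le hne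
    have h1 : Nat.card φ.ker * Nat.card φ.range ≤ Nat.card φ.ker * Nat.card φ.ker :=
      Nat.mul_le_mul le_rfl hrangeφ_le
    have h2 : Nat.card φ.ker * Nat.card φ.ker < q * q := Nat.mul_lt_mul'' h h
    linarith
  have hrangeφ_card : Nat.card φ.range = q := by
    have h := hmulφ
    rw [hkerφ_card, hq2r] at h
    exact Nat.eq_of_mul_eq_mul_left (by omega) h
  have hrangeφ_set : (φ.range : Set K) = (φ.ker : Set K) := by
    apply Set.eq_of_subset_of_ncard_le hrange_sub _ (Set.toFinite _)
    rw [← Nat.card_coe_set_eq, ← Nat.card_coe_set_eq]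
    rw [show (Nat.card (φ.ker : Set K) : ℕ) = Nat.card φ.ker from rfl,
      show (Nat.card (φ.range : Set K) : ℕ) = Nat.card φ.range from rfl,
      hkerφ_card, hrangeφ_card]
  have hsurj : ∀ s : K, s ^ q = s → ∃ x : K, x ^ q + x = s := by
    intro s hs
    have : s ∈ (φ.ker : Set K) := by
      rw [hkerφ_set]
      have := (hfix s).mp hs
      rw [hφapp] at this
      exact this
    rw [← hrangeφ_set] at this
    obtain ⟨x, hx⟩ := this
    exact ⟨x, hx⟩
  -- kernel of F
  have hkerF_set : (F.ker : Set K) = {0, 1} := by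
    ext x
    simp only [SetLike.mem_coe, AddMonoidHom.mem_ker, hFapp, Set.mem_insert_iff,
      Set.mem_singleton_iff]
    constructor
    · intro h
      have hxx : x * (x + 1) = 0 := by rw [← h]; ring
      rcases mul_eq_zero.mp hxx with h0 | h1
      · exact Or.inl h0
      · right
        have hx : x = -1 := eq_neg_of_add_eq_zero_left h1
        exact hx.trans (CharTwo.neg_eq 1)
    · rintro (rfl | rfl)
      · simp
      · rw [one_pow]; exact CharTwo.add_self_eq_zero 1
  have hkerF_card : Nat.card F.ker = 2 := by
    rw [show (Nat.card F.ker : ℕ) = Nat.card (F.ker : Set K) from rfl,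
      Nat.card_coe_set_eq, hkerF_set]
    exact Set.ncard_pair (zero_ne_one)
  have hmulF := as_ker_mul_range F
  rw [hcard, hkerF_card] at hmulF
  have h2r1 : 2 ^ (2 * r) = 2 * 2 ^ (2 * r - 1) := by
    rw [← pow_succ']
    congr 1
    omega
  have hrangeF_card : Nat.card F.range = 2 ^ (2 * r - 1) := by
    rw [h2r1] at hmulF
    omega
  -- F x' = F x  implies  x' = x or x' = x + 1
  have hF2 : ∀ x x' : K, x' ^ 2 + x' = x ^ 2 + x → x' = x ∨ x' = x + 1 := by
    intro x x' h
    have hk : (x' + x) ∈ (F.ker : Set K) := by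
      simp only [SetLike.mem_coe, AddMonoidHom.mem_ker, hFapp, hsq]
      rw [show x' ^ 2 + x ^ 2 + (x' + x) = (x' ^ 2 + x') + (x ^ 2 + x) by ring, h]
      rw [show (x ^ 2 + x + (x ^ 2 + x) : K) = (x ^ 2 + x) * 2 by ring, h2z, mul_zero]
    rw [hkerF_set] at hk
    rcases hk with h0 | h1
    · left
      have : x' = -x := eq_neg_of_add_eq_zero_left h0
      rw [this, CharTwo.neg_eq]
    · right
      rw [Set.mem_singleton_iff] at h1
      have : x' = 1 - x := eq_sub_of_add_eq h1
      rw [this, CharTwo.sub_eq_add]; ring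
  -- membership lemmas
  have hGmem : ∀ s (x : K), x ∈ G s ↔ x ^ q + x = s := by
    intro s x; rw [hG]; rfl
  have hSmem : ∀ s (y : K), y ∈ S s ↔ ∃ x, x ∈ G s ∧ x ^ 2 + x = y := by
    intro s y; rw [hS]; exact Set.mem_image _ _ _
  have hGsucc : ∀ s (x : K), x ∈ G s → x + 1 ∈ G s := by
    intro s x hx
    rw [hGmem] at hx ⊢
    rw [hfrobq, one_pow, show (x ^ q + 1 + (x + 1) : K) = (x ^ q + x) + 1 * 2 by ring,
      h2z, mul_zero, add_zero, hx]
  -- Part 1 : two-to-one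
  have part1 : ∀ s : K, s ^ q = s → ∀ y ∈ S s, {x ∈ G s | x ^ 2 + x = y}.ncard = 2 := by
    intro s _ y hy
    obtain ⟨x₀, hx₀G, hx₀F⟩ := (hSmem s y).mp hy
    have hne : x₀ ≠ x₀ + 1 := by
      intro h
      have := add_left_cancel (a := x₀) (b := (0:K)) (c := (1:K)) (by rw [add_zero, ← h])
      exact one_ne_zero this.symm
    have hset : {x ∈ G s | x ^ 2 + x = y} = {x₀, x₀ + 1} := by
      ext x
      simp only [Set.mem_setOf_eq, Set.mem_insert_iff, Set.mem_singleton_iff]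
      constructor
      · rintro ⟨hxG, hxF⟩
        exact hF2 x₀ x (by rw [hxF, hx₀F])
      · rintro (rfl | rfl)
        · exact ⟨hx₀G, hx₀F⟩
        · refine ⟨hGsucc s x₀ hx₀G, ?_⟩
          rw [hsq, one_pow,
            show (x₀ ^ 2 + 1 + (x₀ + 1) : K) = (x₀ ^ 2 + x₀) + 1 * 2 by ring,
            h2z, mul_zero, add_zero, hx₀F]
    rw [hset]
    exact Set.ncard_pair hne
  -- cardinality of G s
  have hGcard : ∀ s : K, s ^ q = s → (G s).ncard = q := by
    intro s hs
    obtain ⟨x₀, hx₀⟩ := hsurj s hs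
    have himg : G s = (fun d => x₀ + d) '' (φ.ker : Set K) := by
      ext x
      simp only [Set.mem_image, SetLike.mem_coe, AddMonoidHom.mem_ker, hφapp, hGmem]
      constructor
      · intro hx
        refine ⟨x + x₀, ?_, ?_⟩
        · rw [hfrobq, show (x ^ q + x₀ ^ q + (x + x₀) : K) = (x ^ q + x) + (x₀ ^ q + x₀) by ring,
            hx, hx₀, show (s + s : K) = s * 2 by ring, h2z, mul_zero]
        · rw [show (x₀ + (x + x₀) : K) = x + x₀ * 2 by ring, h2z, mul_zero, add_zero]
      · rintro ⟨d, hd, rfl⟩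
        rw [hfrobq, show (x₀ ^ q + d ^ q + (x₀ + d) : K) = (d ^ q + d) + (x₀ ^ q + x₀) by ring,
          hd, hx₀, zero_add]
    rw [himg, Set.ncard_image_of_injective _ (add_right_injective x₀)]
    rw [← Nat.card_coe_set_eq]
    exact hkerφ_card
  -- Part 2 : |S s| = q / 2
  have part2 : ∀ s : K, s ^ q = s → (S s).ncard = q / 2 := by
    intro s hs
    have hGfin : (G s).Finite := Set.toFinite _
    set Gf : Finset K := hGfin.toFinset with hGf
    have hGfc : (Gf : Set K) = G s := hGfin.coe_toFinset
    have hScoe : S s = ↑(Gf.image (fun x : K => x ^ 2 + x)) := by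
      rw [hS, Finset.coe_image, hGfc]
    have hsum := Finset.card_eq_sum_card_image (fun x : K => x ^ 2 + x) Gf
    have hfib : ∀ y ∈ Gf.image (fun x : K => x ^ 2 + x),
        (Gf.filter (fun x => x ^ 2 + x = y)).card = 2 := by
      intro y hy
      have hyS : y ∈ S s := by
        rw [hScoe]; exact_mod_cast hy
      have hcoe : ((Gf.filter (fun x => x ^ 2 + x = y)) : Set K)
          = {x ∈ G s | x ^ 2 + x = y} := by
        ext x
        simp only [Finset.coe_filter, Set.mem_setOf_eq, Set.Finite.mem_toFinset, hGf]
      have := part1 s hs y hyS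
      rw [← hcoe, Set.ncard_coe_finset] at this
      exact this
    rw [Finset.sum_congr rfl hfib, Finset.sum_const, smul_eq_mul] at hsum
    have hGfcard : Gf.card = q := by
      rw [← Set.ncard_coe_finset, hGfc]
      exact hGcard s hs
    have hScard : (S s).ncard = (Gf.image (fun x : K => x ^ 2 + x)).card := by
      rw [hScoe, Set.ncard_coe_finset]
    rw [hScard]
    omega
  -- range of F equals the trace-zero set
  have htr_sub : (F.range : Set K) ⊆ {x : K | ∑ i ∈ Finset.range (2 * r), x ^ 2 ^ i = 0} := by
    rintro y ⟨x, rfl⟩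
    simp only [Set.mem_setOf_eq, hFapp]
    have hterm : ∀ i : ℕ, (x ^ 2 + x) ^ 2 ^ i = x ^ 2 ^ (i + 1) - x ^ 2 ^ i := by
      intro i
      rw [add_pow_char_pow, ← pow_mul, ← pow_succ', CharTwo.sub_eq_add]
    calc ∑ i ∈ Finset.range (2 * r), (x ^ 2 + x) ^ 2 ^ i
        = ∑ i ∈ Finset.range (2 * r), (x ^ 2 ^ (i + 1) - x ^ 2 ^ i) := by
          exact Finset.sum_congr rfl (fun i _ => hterm i)
      _ = x ^ 2 ^ (2 * r) - x ^ 2 ^ 0 := Finset.sum_range_sub (fun i => x ^ 2 ^ i) (2 * r)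
      _ = 0 := by
          rw [show (2 : ℕ) ^ (2 * r) = q ^ 2 by rw [hq, ← pow_mul, mul_comm], hpow2,
            pow_zero, pow_one, sub_self]
  have htr_eq : (F.range : Set K) = {x : K | ∑ i ∈ Finset.range (2 * r), x ^ 2 ^ i = 0} := by
    apply Set.eq_of_subset_of_ncard_le htr_sub _ (Set.toFinite _)
    have h1 := as_card_trace_le (K := K) (2 * r) (by omega)
    refine h1.trans ?_
    rw [← Nat.card_coe_set_eq]
    rw [show (Nat.card (F.range : Set K) : ℕ) = Nat.card F.range from rfl, hrangeF_card]
  -- Part 3 : union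
  have part3 : (⋃ s ∈ {t : K | t ^ q = t}, S s) =
      {x : K | ∑ i ∈ Finset.range (2 * r), x ^ 2 ^ i = 0} := by
    rw [← htr_eq]
    ext y
    simp only [Set.mem_iUnion, Set.mem_setOf_eq, SetLike.mem_coe, AddMonoidHom.mem_range]
    constructor
    · rintro ⟨s, _, hyS⟩
      obtain ⟨x, _, hxF⟩ := (hSmem s y).mp hyS
      exact ⟨x, hxF⟩
    · rintro ⟨x, hx⟩
      refine ⟨x ^ q + x, ?_, ?_⟩
      · have : φ x ∈ (φ.ker : Set K) := hrange_sub ⟨x, rfl⟩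
        rw [hkerφ_set] at this
        rw [hφapp] at this
        exact (hfix _).mpr (by rw [hφapp]; exact this)
      · exact (hSmem _ y).mpr ⟨x, (hGmem _ x).mpr rfl, hx⟩
  -- Part 4 : disjointness
  have part4 : ∀ s t : K, s ^ q = s → t ^ q = t → s ≠ t → Disjoint (S s) (S t) := by
    intro s t _ _ hst
    rw [Set.disjoint_left]
    intro y hys hyt
    obtain ⟨x, hxG, hxF⟩ := (hSmem s y).mp hys
    obtain ⟨x', hx'G, hx'F⟩ := (hSmem t y).mp hyt
    rw [hGmem] at hxG hx'G
    apply hst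
    rcases hF2 x x' (by rw [hxF, hx'F]) with rfl | rfl
    · rw [← hxG, ← hx'G]
    · rw [← hxG, ← hx'G, hfrobq, one_pow,
        show (x ^ q + 1 + (x + 1) : K) = (x ^ q + x) + 1 * 2 by ring, h2z, mul_zero, add_zero]
  -- Part 5 : addition
  have part5 : ∀ s t : K, s ^ q = s → t ^ q = t → S s + S t = S (s + t) := by
    intro s t hsfix htfix
    ext y
    constructor
    · intro hy
      obtain ⟨y₁, hy₁, y₂, hy₂, rfl⟩ := Set.mem_add.mp hy
      obtain ⟨a, haG, haF⟩ := (hSmem s y₁).mp hy₁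
      obtain ⟨b, hbG, hbF⟩ := (hSmem t y₂).mp hy₂
      rw [hGmem] at haG hbG
      refine (hSmem (s + t) _).mpr ⟨a + b, (hGmem _ _).mpr ?_, ?_⟩
      · rw [hfrobq, show (a ^ q + b ^ q + (a + b) : K) = (a ^ q + a) + (b ^ q + b) by ring,
          haG, hbG]
      · rw [hsq, show (a ^ 2 + b ^ 2 + (a + b) : K) = (a ^ 2 + a) + (b ^ 2 + b) by ring,
          haF, hbF]
    · intro hy
      obtain ⟨z, hzG, hzF⟩ := (hSmem (s + t) y).mp hy
      rw [hGmem] at hzG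
      obtain ⟨a, ha⟩ := hsurj s hsfix
      have hbG : (z + a) ^ q + (z + a) = t := by
        rw [hfrobq, show (z ^ q + a ^ q + (z + a) : K) = (z ^ q + z) + (a ^ q + a) by ring,
          hzG, ha, show (s + t + s : K) = t + s * 2 by ring, h2z, mul_zero, add_zero]
      have hz : z = a + (z + a) := by
        rw [show (a + (z + a) : K) = z + a * 2 by ring, h2z, mul_zero, add_zero]
      have hyeq : y = (a ^ 2 + a) + ((z + a) ^ 2 + (z + a)) := by
        have hcalc : (a ^ 2 + a) + ((z + a) ^ 2 + (z + a)) = z ^ 2 + z := by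
          rw [hsq, show (a ^ 2 + a + (z ^ 2 + a ^ 2 + (z + a)) : K)
            = (z ^ 2 + z) + (a ^ 2 + a) * 2 by ring, h2z, mul_zero, add_zero]
        rw [← hzF, hcalc]
      rw [hyeq]
      exact Set.add_mem_add
        ((hSmem s _).mpr ⟨a, (hGmem _ _).mpr ha, rfl⟩)
        ((hSmem t _).mpr ⟨z + a, (hGmem _ _).mpr hbG, rfl⟩)
  exact ⟨part1, part2, part3, part4, part5⟩
end

section
/- Let q be an even prime power. For each r ∈ F_q, with G_s = {x ∈ F_{q^2} : x^q + x = s} and S_r the image of G_r under x ↦ x² + x, one has G_{r² + r} = S_r ∪ S_{r+1}, a disjoint union. -/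
/-- Partial "half sum" `x + x^2 + x^4 + ⋯ + x^(2^(n-1))`. -/
def auxH {K : Type*} [CommRing K] : ℕ → K → K
  | 0, _ => 0
  | n + 1, x => auxH n x + x ^ 2 ^ n

/-- Let `q` be an even prime power and `K = F_{q²}`. For `s ∈ F_q`,
with `G_t = {x ∈ K : x^q + x = t}` and `S_s` the image of `G_s` under `x ↦ x² + x`,
one has `G_{s² + s} = S_s ∪ S_{s+1}`, a disjoint union. -/
theorem G_eq_union_S
    (q r : ℕ) (hr : 0 < r) (hq : q = 2 ^ r)
    (K : Type*) [Field K] [Fintype K] (hK : Fintype.card K = q ^ 2)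
    (s : K) (hs : s ^ q = s) :
    {x : K | x ^ q + x = s ^ 2 + s} =
      ((fun x : K => x ^ 2 + x) '' {x : K | x ^ q + x = s}) ∪
      ((fun x : K => x ^ 2 + x) '' {x : K | x ^ q + x = s + 1}) ∧
    Disjoint ((fun x : K => x ^ 2 + x) '' {x : K | x ^ q + x = s})
      ((fun x : K => x ^ 2 + x) '' {x : K | x ^ q + x = s + 1}) := by
  -- characteristic 2
  have h2 : (2 : K) = 0 := by
    have hcard : ((Fintype.card K : K)) = 0 := FiniteField.cast_card_eq_zero K
    rw [hK, hq] at hcard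
    push_cast at hcard
    rw [← pow_mul] at hcard
    exact pow_eq_zero_iff (by positivity) |>.mp hcard
  have hq2 : 2 ≤ q := by
    rw [hq]
    calc 2 = 2 ^ 1 := rfl
    _ ≤ 2 ^ r := Nat.pow_le_pow_right (by norm_num) hr
  have sq_add : ∀ a b : K, (a + b) ^ 2 = a ^ 2 + b ^ 2 := fun a b => by
    linear_combination (a * b) * h2
  have pow22 : ∀ (n : ℕ) (a b : K), (a + b) ^ 2 ^ n = a ^ 2 ^ n + b ^ 2 ^ n := by
    intro n
    induction n with
    | zero => intro a b; simp
    | succ n ih =>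
      intro a b
      rw [pow_succ, pow_mul, pow_mul, pow_mul, ih, sq_add]
  have frob_add : ∀ a b : K, (a + b) ^ q = a ^ q + b ^ q := by
    intro a b; rw [hq]; exact pow22 r a b
  have hpow : ∀ a : K, (a ^ q) ^ q = a := by
    intro a
    rw [← pow_mul, ← sq, ← hK, FiniteField.pow_card]
  have key : ∀ x : K, (x ^ 2 + x) ^ q + (x ^ 2 + x) = (x ^ q + x) ^ 2 + (x ^ q + x) := by
    intro x
    have hx2q : (x ^ 2 : K) ^ q = (x ^ q) ^ 2 := by
      rw [← pow_mul, mul_comm, pow_mul]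
    rw [frob_add, hx2q]
    linear_combination (-(x ^ q * x)) * h2
  -- there is an element of nonzero "trace"
  have hexists : ∃ α : K, α ^ q + α ≠ 0 := by
    by_contra hcon
    push_neg at hcon
    have hPne : (Polynomial.X ^ q + Polynomial.X : Polynomial K) ≠ 0 := by
      intro h0
      have hco := congrArg (fun p => Polynomial.coeff p q) h0
      simp [Polynomial.coeff_X_pow, Polynomial.coeff_X, show ¬ (1 = q) by omega] at hco
    have hsub : (Finset.univ : Finset K).val ≤ (Polynomial.X ^ q + Polynomial.X : Polynomial K).roots := by
      rw [Multiset.le_iff_subset (Finset.univ : Finset K).nodup]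
      intro a _
      rw [Polynomial.mem_roots hPne]
      simp [Polynomial.IsRoot, hcon a]
    have hc1 := Multiset.card_le_card hsub
    have hdeg := Polynomial.card_roots' (Polynomial.X ^ q + Polynomial.X : Polynomial K)
    have hnd : (Polynomial.X ^ q + Polynomial.X : Polynomial K).natDegree ≤ q := by
      refine le_trans (Polynomial.natDegree_add_le _ _) ?_
      simp [Polynomial.natDegree_X_pow, Polynomial.natDegree_X]
      omega
    have hcardeq : (Multiset.card (Finset.univ : Finset K).val) = q ^ 2 := by
      rw [← hK]; rfl
    have : q ^ 2 ≤ q := by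
      calc q ^ 2 = Multiset.card (Finset.univ : Finset K).val := hcardeq.symm
      _ ≤ _ := hc1
      _ ≤ _ := hdeg
      _ ≤ q := hnd
    nlinarith
  obtain ⟨α, hα⟩ := hexists
  have hc : (α ^ q + α) ^ q = α ^ q + α := by
    rw [frob_add, hpow, add_comm]
  have solve : ∀ t : K, t ^ q = t → ∃ x : K, x ^ q + x = t := by
    intro t ht
    refine ⟨t * (α ^ q + α)⁻¹ * α, ?_⟩
    have h1 : (t * (α ^ q + α)⁻¹ * α) ^ q = t * (α ^ q + α)⁻¹ * α ^ q := by
      rw [mul_pow, mul_pow, ht, inv_pow, hc]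
    rw [h1]
    have h3 : t * (α ^ q + α)⁻¹ * α ^ q + t * (α ^ q + α)⁻¹ * α
        = t * (α ^ q + α)⁻¹ * (α ^ q + α) := by ring
    rw [h3, mul_assoc, inv_mul_cancel₀ hα, mul_one]
  have hH : ∀ (n : ℕ) (x : K), (auxH n x) ^ 2 + auxH n x = x ^ 2 ^ n + x := by
    intro n
    induction n with
    | zero => intro x; simp [auxH]; linear_combination (-x) * h2
    | succ n ih =>
      intro x
      simp only [auxH]
      rw [sq_add]
      have h1 : ((x ^ 2 ^ n : K)) ^ 2 = x ^ 2 ^ (n + 1) := by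
        rw [← pow_mul, pow_succ]
      rw [h1]
      linear_combination ih x + x ^ 2 ^ n * h2
  have hHr : ∀ x : K, (auxH r x) ^ 2 + auxH r x = x ^ q + x := by
    intro x; rw [hH, hq]
  have fiber : ∀ a b : K, a ^ 2 + a = b ^ 2 + b → a = b ∨ a = b + 1 := by
    intro a b hab
    have h1 : (a + b) * (a + b + 1) = 0 := by
      linear_combination hab + (b ^ 2 + b + a * b) * h2
    rcases mul_eq_zero.mp h1 with h | h
    · left; linear_combination h - b * h2
    · right; linear_combination h - (b + 1) * h2
  refine ⟨?_, ?_⟩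
  · ext y
    simp only [Set.mem_setOf_eq, Set.mem_union, Set.mem_image]
    constructor
    · intro hy
      obtain ⟨u, hu⟩ := solve s hs
      have hw : (u ^ 2 + u) ^ q + (u ^ 2 + u) = s ^ 2 + s := by rw [key, hu]
      set z := y + (u ^ 2 + u) with hzdef
      have hz0 : z ^ q + z = 0 := by
        rw [hzdef, frob_add]
        linear_combination hy + hw + (s ^ 2 + s) * h2
      have hz : z ^ q = z := by linear_combination hz0 - z * h2
      obtain ⟨v, hv⟩ := solve z hz
      have hm : (auxH r v) ^ 2 + auxH r v = z := by rw [hHr, hv]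
      have hx : (u + auxH r v) ^ 2 + (u + auxH r v) = y := by
        linear_combination hm + hzdef + (u ^ 2 + u * auxH r v + u) * h2
      rcases fiber ((u + auxH r v) ^ q + (u + auxH r v)) s
          (by rw [← key, hx]; exact hy) with h | h
      · exact Or.inl ⟨u + auxH r v, h, hx⟩
      · exact Or.inr ⟨u + auxH r v, h, hx⟩
    · rintro (⟨x, hx, rfl⟩ | ⟨x, hx, rfl⟩)
      · rw [key, hx]
      · rw [key, hx]; linear_combination (s + 1) * h2
  · rw [Set.disjoint_left]
    rintro y ⟨x, hx, hxy⟩ ⟨x', hx', hxy'⟩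
    simp only [Set.mem_setOf_eq] at hx hx'
    have hxy2 : x ^ 2 + x = y := hxy
    have hxy2' : x' ^ 2 + x' = y := hxy'
    rcases fiber x x' (by rw [hxy2, ← hxy2']) with h | h
    · rw [h] at hx
      exact (one_ne_zero : (1:K) ≠ 0) (by linear_combination hx - hx')
    · rw [h, frob_add, one_pow] at hx
      exact (one_ne_zero : (1:K) ≠ 0) (by linear_combination hx - hx' - h2)
end

section
/- Let q be an even prime power, let T_e (for e ∈ F_2) be the set of elements of F_{q^2} with absolute trace e, and let S_i ⊆ F_q (for i ∈ F_2) be the set of elements of F_q with absolute trace (over F_2, computed in F_q) equal to i. For λ ∈ F_{q^2}, λ ≠ 0, write μ = λ^q + λ. Then: if μ = 0 then |T_e ∩ λ·S_i| = (q/2)·[e = 0]; if μ = 1 then |T_e ∩ λ·S_i| = (q/2)·[e = i]; and if μ ∉ {0,1} then |T_e ∩ λ·S_i| = q/4. -/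
/-!
For `s ∈ F_q` the absolute trace of `λ s` equals `tr(μ s)` with `μ = λ^q + λ ∈ F_q`, so
`|T_e ∩ λ·S_i|` is the size of the fiber over `(e, i)` of the additive map
`s ↦ (tr(μ s), tr s)` on `F_q`. All nonempty fibers of an additive map have the same size, hence
this is `q / |image|` on the image and `0` off it. The image is `{(0,0), (0,1)}` for `μ = 0`, the
diagonal for `μ = 1`, and all of `F_2²` otherwise, since `s ↦ tr(ν s)` takes the value `1` on `F_q`
for each of `ν = μ, 1, μ + 1`; that `tr` is not identically zero on `F_q` is a degree count, as
`∑_{j<r} X^(2^j)` has fewer than `q` roots.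
-/

open scoped Classical

open Finset Polynomial

section AbsTrace

variable {R : Type*} [CommSemiring R] [CharP R 2]

/-- On `{x | x ^ 2 ^ r = x} = F_{2^r}` this is the absolute trace of `F_{2^r}`. -/
noncomputable def absTrace (r : ℕ) : R →+ R :=
  ∑ j ∈ range r, (iterateFrobenius R 2 j : R →+* R).toAddMonoidHom

lemma absTrace_apply (r : ℕ) (x : R) : absTrace r x = ∑ j ∈ range r, x ^ 2 ^ j := by
  simp [absTrace, iterateFrobenius_def]

lemma absTrace_sq_add (r : ℕ) (x : R) : absTrace r x ^ 2 + x = absTrace r x + x ^ 2 ^ r := by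
  have hsq : absTrace r x ^ 2 = ∑ j ∈ range r, x ^ 2 ^ (j + 1) := by
    rw [← frobenius_def 2, absTrace_apply, map_sum]
    simp only [frobenius_def, ← pow_mul, ← pow_succ]
  rw [hsq, absTrace_apply, ← sum_range_succ, sum_range_succ' (fun j => x ^ 2 ^ j), pow_zero,
    pow_one]

lemma absTrace_add_index (m n : ℕ) (x : R) :
    absTrace (m + n) x = absTrace m x + absTrace n (x ^ 2 ^ m) := by
  simp only [absTrace_apply, sum_range_add, ← pow_mul, ← pow_add]

lemma absTrace_two_mul_mul {r : ℕ} {a s : R} (hs : s ^ 2 ^ r = s) :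
    absTrace (2 * r) (a * s) = absTrace r ((a ^ 2 ^ r + a) * s) := by
  rw [two_mul, absTrace_add_index, mul_pow, hs, add_mul, map_add, add_comm]

end AbsTrace

lemma absTrace_eq_zero_or_eq_one {R : Type*} [CommRing R] [IsDomain R] [CharP R 2] {r : ℕ}
    {x : R} (hx : x ^ 2 ^ r = x) : absTrace r x = 0 ∨ absTrace r x = 1 := by
  have h := absTrace_sq_add r x
  rw [hx, add_left_inj] at h
  exact IsIdempotentElem.iff_eq_zero_or_one.mp (by rw [IsIdempotentElem, ← sq, h])

lemma natDegree_sum_X_pow_two_pow_lt {R : Type*} [CommRing R] [Nontrivial R] (k : ℕ) :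
    (∑ j ∈ range k, X ^ 2 ^ j : R[X]).natDegree < 2 ^ k := by
  refine (natDegree_sum_le_of_forall_le _ _ (n := 2 ^ k - 1) fun j hj => ?_).trans_lt
    (Nat.sub_one_lt (by positivity))
  rw [natDegree_X_pow]
  exact Nat.le_sub_one_of_lt (Nat.pow_lt_pow_right one_lt_two (mem_range.mp hj))

lemma exists_absTrace_ne_zero {R : Type*} [CommRing R] [IsDomain R] [CharP R 2] {ι : Type*}
    [Finite ι] {f : ι → R} (hf : Function.Injective f) {k : ℕ} (hcard : 2 ^ k < Nat.card ι) :
    ∃ i, absTrace (k + 1) (f i) ≠ 0 := by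
  have := Fintype.ofFinite ι
  have hdeg : (∑ j ∈ range (k + 1), X ^ 2 ^ j : R[X]).natDegree = 2 ^ k := by
    rw [sum_range_succ, natDegree_add_eq_right_of_natDegree_lt] <;> rw [natDegree_X_pow]
    exact natDegree_sum_X_pow_two_pow_lt k
  have hne : (∑ j ∈ range (k + 1), X ^ 2 ^ j : R[X]) ≠ 0 :=
    ne_zero_of_natDegree_gt (n := 0) (by rw [hdeg]; positivity)
  by_contra! h
  refine hne (eq_zero_of_natDegree_lt_card_of_eval_eq_zero _ hf (fun i => ?_) ?_)
  · simpa [eval_finsetSum, absTrace_apply] using h i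
  · rwa [hdeg, Fintype.card_eq_nat_card]

lemma pow_sub_self_dvd_pow_pow_sub_self {R : Type*} [CommRing R] (p : ℕ) [ExpChar R p] (x : R)
    (n m : ℕ) : x ^ p ^ n - x ∣ x ^ (p ^ n) ^ m - x := by
  induction m with
  | zero => simp
  | succ m ih =>
    have h : x ^ (p ^ n) ^ (m + 1) - x = (x ^ (p ^ n) ^ m - x) ^ p ^ n + (x ^ p ^ n - x) := by
      rw [sub_pow_expChar_pow, pow_succ (p ^ n) m, pow_mul]; ring
    rw [h]
    exact dvd_add (dvd_pow ih (pow_ne_zero n (expChar_ne_zero R p))) dvd_rfl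

def frobeniusFixedField (K : Type*) [Field K] (p n : ℕ) [ExpChar K p] : Subfield K :=
  (iterateFrobenius K p n).eqLocusField (RingHom.id K)

lemma mem_frobeniusFixedField {K : Type*} [Field K] {p n : ℕ} [ExpChar K p] {x : K} :
    x ∈ frobeniusFixedField K p n ↔ x ^ p ^ n = x := Iff.rfl

lemma card_frobeniusFixedField {K : Type*} [Field K] [Fintype K] {p n m : ℕ} [Fact p.Prime]
    [CharP K p] (hn : n ≠ 0) (hK : Fintype.card K = (p ^ n) ^ m) :
    Nat.card (frobeniusFixedField K p n) = p ^ n := by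
  have hp : 1 < p := (Fact.out : p.Prime).one_lt
  have hsplit : (X ^ Fintype.card K - X : K[X]).Splits := by
    rw [splits_iff_card_roots, FiniteField.roots_X_pow_card_sub_X,
      FiniteField.X_pow_card_sub_X_natDegree_eq K Fintype.one_lt_card]
    rfl
  have hdvd : (X ^ p ^ n - X : K[X]) ∣ X ^ Fintype.card K - X := by
    rw [hK]; exact pow_sub_self_dvd_pow_pow_sub_self p X n m
  have hcard := card_rootSet_eq_natDegree (F := K) (K := K)
    (galois_poly_separable p (p ^ n) (dvd_pow_self p hn))
    (by rw [Algebra.algebraMap_self, map_id]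
        exact hsplit.of_dvd (FiniteField.X_pow_card_sub_X_ne_zero K Fintype.one_lt_card) hdvd)
  rw [FiniteField.X_pow_card_pow_sub_X_natDegree_eq K hn hp] at hcard
  rw [← hcard, ← Nat.card_eq_fintype_card]
  refine Nat.card_congr (Equiv.subtypeEquivRight fun x => ?_)
  rw [mem_frobeniusFixedField,
    mem_rootSet_of_ne (FiniteField.X_pow_card_pow_sub_X_ne_zero K hn hp)]
  simp [sub_eq_zero]

lemma AddMonoidHom.card_fiber_of_range_eq {G M : Type*} [AddGroup G] [Fintype G] [AddMonoid M]
    [DecidableEq M] (f : G →+ M) {V : Finset M} (hV : Set.range f = V) (y : M) :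
    #{g | f g = y} = if y ∈ V then Fintype.card G / #V else 0 := by
  have hmem : ∀ {v}, v ∈ V ↔ v ∈ Set.range f := by simp [hV]
  split_ifs with hy
  · have hsum : Fintype.card G = #V * #{g | f g = y} := by
      rw [← card_univ, card_eq_sum_card_fiberwise fun g _ => hmem.mpr ⟨g, rfl⟩, ← smul_eq_mul,
        ← sum_const]
      exact sum_congr rfl fun v hv => card_fiber_eq_of_mem_range f (hmem.mp hv) (hmem.mp hy)
    rw [hsum, Nat.mul_div_cancel_left _ (card_pos.mpr ⟨y, hy⟩)]
  · exact card_eq_zero.mpr (filter_eq_empty_iff.mpr fun g _ hg => hy (hmem.mpr ⟨g, hg⟩))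

section AbsTracePair

variable {K : Type*} [Field K] [CharP K 2] {r : ℕ}

local notation "𝔽" => frobeniusFixedField K 2 r

noncomputable def absTracePair (r : ℕ) (μ : K) (S : Subfield K) : S →+ K × K :=
  (((absTrace r).comp (AddMonoidHom.mulLeft μ)).prod (absTrace r)).comp S.subtype.toAddMonoidHom

@[simp]
lemma absTracePair_apply (μ : K) (S : Subfield K) (s : S) :
    absTracePair r μ S s = (absTrace r (μ * s), absTrace r (s : K)) := rfl

lemma ncard_absTrace_inter_image_eq_card_fiber [Fintype K] {lam : K} (hlam : lam ≠ 0) (e i : K) :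
    ({x | absTrace (2 * r) x = e} ∩ (lam * ·) '' {x | x ^ 2 ^ r = x ∧ absTrace r x = i}).ncard =
      #{s | absTracePair r (lam ^ 2 ^ r + lam) 𝔽 s = (e, i)} := by
  have hset : {x | absTrace (2 * r) x = e} ∩ (lam * ·) '' {x | x ^ 2 ^ r = x ∧ absTrace r x = i} =
      (fun s : 𝔽 => lam * s) '' ↑({s | absTracePair r (lam ^ 2 ^ r + lam) 𝔽 s = (e, i)} :
        Finset 𝔽) := by
    ext x
    simp only [Set.mem_inter_iff, Set.mem_ofPred_eq, Set.mem_image, coe_filter, mem_univ, true_and,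
      absTracePair_apply, Prod.mk.injEq, Subtype.exists, mem_frobeniusFixedField]
    constructor
    · rintro ⟨hx, s, ⟨hs, hsi⟩, rfl⟩
      exact ⟨s, hs, ⟨by rwa [← absTrace_two_mul_mul hs], hsi⟩, rfl⟩
    · rintro ⟨s, hs, ⟨hse, hsi⟩, rfl⟩
      exact ⟨by rwa [absTrace_two_mul_mul hs], s, ⟨hs, hsi⟩, rfl⟩
  have hinj : Function.Injective fun s : 𝔽 => lam * s :=
    (mul_right_injective₀ hlam).comp Subtype.val_injective
  rw [hset, Set.ncard_image_of_injective _ hinj, Set.ncard_coe_finset]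

lemma exists_absTrace_mul_eq_one {ν : K} (hν : ν ∈ 𝔽) (h0 : ν ≠ 0) {t : 𝔽}
    (ht : absTrace r (t : K) = 1) : ∃ s : 𝔽, absTrace r (ν * s) = 1 :=
  ⟨⟨ν⁻¹ * t, mul_mem (inv_mem hν) t.2⟩, by
    simp only [← mul_assoc, mul_inv_cancel₀ h0, one_mul, ht]⟩

lemma range_absTracePair_zero {t : 𝔽} (ht : absTrace r (t : K) = 1) :
    Set.range (absTracePair r 0 𝔽) = ↑({(0, 0), (0, 1)} : Finset (K × K)) := by
  ext ⟨a, b⟩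
  simp only [Set.mem_range, absTracePair_apply, zero_mul, map_zero, coe_insert, coe_singleton,
    Set.mem_insert_iff, Set.mem_singleton_iff, Prod.mk.injEq]
  constructor
  · rintro ⟨s, rfl, rfl⟩
    simpa using absTrace_eq_zero_or_eq_one s.2
  · rintro (⟨rfl, rfl⟩ | ⟨rfl, rfl⟩)
    · exact ⟨0, rfl, by simp⟩
    · exact ⟨t, rfl, ht⟩

lemma range_absTracePair_one {t : 𝔽} (ht : absTrace r (t : K) = 1) :
    Set.range (absTracePair r 1 𝔽) = ↑({(0, 0), (1, 1)} : Finset (K × K)) := by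
  ext ⟨a, b⟩
  simp only [Set.mem_range, absTracePair_apply, one_mul, coe_insert, coe_singleton,
    Set.mem_insert_iff, Set.mem_singleton_iff, Prod.mk.injEq]
  constructor
  · rintro ⟨s, rfl, rfl⟩
    rcases absTrace_eq_zero_or_eq_one s.2 with h | h <;> simp [h]
  · rintro (⟨rfl, rfl⟩ | ⟨rfl, rfl⟩)
    · exact ⟨0, by simp, by simp⟩
    · exact ⟨t, ht, ht⟩

lemma mem_range_absTracePair_of_ne {μ : K} (hμ : μ ∈ 𝔽) (h0 : μ ≠ 0) (h1 : μ ≠ 1) {t : 𝔽}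
    (ht : absTrace r (t : K) = 1) :
    (1, 0) ∈ (absTracePair r μ 𝔽).range ∧ (0, 1) ∈ (absTracePair r μ 𝔽).range := by
  have hbin : ∀ s : 𝔽, absTrace r (s : K) = 0 ∨ absTrace r (s : K) = 1 :=
    fun s => absTrace_eq_zero_or_eq_one s.2
  obtain ⟨a, ha⟩ := exists_absTrace_mul_eq_one hμ h0 ht
  obtain ⟨c, hc⟩ := exists_absTrace_mul_eq_one (add_mem hμ (one_mem _))
    (mt CharTwo.add_eq_zero.mp h1) ht
  rw [add_mul, one_mul, map_add] at hc
  -- `a`, `t`, `c` map to `(1, _)`, `(_, 1)` and off the diagonal; in every case `(1, 0)` and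
  -- `(0, 1)` are images of one of them or of a sum of two.
  constructor
  · rcases hbin c with hc0 | hc0
    · exact ⟨c, by simp_all⟩
    · rcases hbin a with ha0 | ha0
      · exact ⟨a, by simp_all⟩
      · exact ⟨a + c, by simp_all [mul_add, CharTwo.add_self_eq_zero]⟩
  · rcases hbin c with hc0 | hc0
    · rcases absTrace_eq_zero_or_eq_one (mul_mem hμ t.2) with ht0 | ht0
      · exact ⟨t, by simp_all⟩
      · exact ⟨t + c, by simp_all [mul_add, CharTwo.add_self_eq_zero]⟩
    · exact ⟨c, by simp_all⟩

lemma range_absTracePair_of_ne {μ : K} (hμ : μ ∈ 𝔽) (h0 : μ ≠ 0) (h1 : μ ≠ 1) {t : 𝔽}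
    (ht : absTrace r (t : K) = 1) :
    Set.range (absTracePair r μ 𝔽) = ↑({0, 1} ×ˢ {0, 1} : Finset (K × K)) := by
  obtain ⟨h10, h01⟩ := mem_range_absTracePair_of_ne hμ h0 h1 ht
  rw [← AddMonoidHom.coe_range]
  ext ⟨x, y⟩
  simp only [SetLike.mem_coe, coe_product, Set.mem_prod, coe_insert, coe_singleton,
    Set.mem_insert_iff, Set.mem_singleton_iff]
  constructor
  · rintro ⟨s, hs⟩
    rw [absTracePair_apply, Prod.mk.injEq] at hs
    rw [← hs.1, ← hs.2]
    exact ⟨absTrace_eq_zero_or_eq_one (mul_mem hμ s.2), absTrace_eq_zero_or_eq_one s.2⟩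
  · rintro ⟨rfl | rfl, rfl | rfl⟩
    · exact zero_mem _
    · exact h01
    · exact h10
    · simpa using add_mem h10 h01

lemma exists_absTrace_eq_one (hr : r ≠ 0) (hcard : Nat.card 𝔽 = 2 ^ r) :
    ∃ t : 𝔽, absTrace r (t : K) = 1 := by
  obtain ⟨k, hk⟩ := Nat.exists_eq_add_one_of_ne_zero hr
  have : Finite 𝔽 := Nat.finite_of_card_ne_zero (by rw [hcard]; positivity)
  obtain ⟨t, ht⟩ := exists_absTrace_ne_zero (f := ((↑) : 𝔽 → K)) Subtype.val_injective (k := k)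
    (by rw [hcard, hk]; exact Nat.pow_lt_pow_right one_lt_two k.lt_add_one)
  rw [← hk] at ht
  exact ⟨t, (absTrace_eq_zero_or_eq_one t.2).resolve_left ht⟩

end AbsTracePair

/-- Let `q = 2^r` (`r ≥ 2`) and `K = F_{q²} ⊇ F_q`. For `e ∈ F₂`
let `T_e` be the set of elements of `K` of absolute trace `e` (trace to `F₂` being
`x ↦ ∑_{j<2r} x^{2^j}`), and for `i ∈ F₂` let `S_i ⊆ F_q` be the set of elements of
`F_q` of absolute trace `i` (computed in `F_q`, i.e. `x ↦ ∑_{j<r} x^{2^j}`).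
For `λ ≠ 0` with `μ = λ^q + λ`:
if `μ = 0` then `|T_e ∩ λ·S_i| = (q/2)·[e = 0]`; if `μ = 1` then
`|T_e ∩ λ·S_i| = (q/2)·[e = i]`; if `μ ∉ {0,1}` then `|T_e ∩ λ·S_i| = q/4`. -/
theorem card_trace_inter_scaled_hyperplane
    (q r : ℕ) (hr : 2 ≤ r) (hq : q = 2 ^ r)
    (K : Type*) [Field K] [Fintype K] (hK : Fintype.card K = q ^ 2)
    (e i : K) (he : e = 0 ∨ e = 1) (hi : i = 0 ∨ i = 1)
    (lam : K) (hlam : lam ≠ 0)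
    (T S : K → Set K)
    (hT : ∀ e', T e' = {x : K | ∑ j ∈ Finset.range (2 * r), x ^ 2 ^ j = e'})
    (hS : ∀ i', S i' = {x : K | x ^ q = x ∧ ∑ j ∈ Finset.range r, x ^ 2 ^ j = i'}) :
    (lam ^ q + lam = 0 →
      (T e ∩ (fun s => lam * s) '' S i).ncard = if e = 0 then q / 2 else 0) ∧
    (lam ^ q + lam = 1 →
      (T e ∩ (fun s => lam * s) '' S i).ncard = if e = i then q / 2 else 0) ∧
    (lam ^ q + lam ≠ 0 → lam ^ q + lam ≠ 1 →
      (T e ∩ (fun s => lam * s) '' S i).ncard = q / 4) := by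
  subst hq
  have : CharP K 2 := charP_of_card_eq_prime_pow (f := 2 * r) (by rw [hK, ← pow_mul, mul_comm])
  set F := frobeniusFixedField K 2 r
  have hF : Nat.card F = 2 ^ r := card_frobeniusFixedField (by omega) hK
  obtain ⟨t, ht⟩ := exists_absTrace_eq_one (by omega) hF
  have hμ : lam ^ 2 ^ r + lam ∈ F := by
    rw [mem_frobeniusFixedField, add_pow_char_pow, ← pow_mul, ← sq, ← hK, FiniteField.pow_card,
      add_comm]
  have hcount : (T e ∩ (fun s => lam * s) '' S i).ncard =
      #{s | absTracePair r (lam ^ 2 ^ r + lam) F s = (e, i)} := by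
    rw [← ncard_absTrace_inter_image_eq_card_fiber hlam, hT, hS]
    simp only [absTrace_apply]
  rw [Nat.card_eq_fintype_card] at hF
  rw [hcount]
  refine ⟨fun h0 => ?_, fun h1 => ?_, fun h0 h1 => ?_⟩
  · rw [h0, AddMonoidHom.card_fiber_of_range_eq _ (range_absTracePair_zero ht), hF,
      card_pair (by simp)]
    refine if_congr ?_ rfl rfl
    rcases hi with rfl | rfl <;> simp
  · rw [h1, AddMonoidHom.card_fiber_of_range_eq _ (range_absTracePair_one ht), hF,
      card_pair (by simp)]
    refine if_congr ?_ rfl rfl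
    rcases he with rfl | rfl <;> rcases hi with rfl | rfl <;> simp
  · rw [AddMonoidHom.card_fiber_of_range_eq _ (range_absTracePair_of_ne hμ h0 h1 ht), hF,
      card_product, card_pair zero_ne_one, if_pos (mem_product.mpr ⟨by simpa, by simpa⟩)]
end

section
/- Let q be an even prime power, i, j ∈ F_2, k ∈ F_q, r = k + i + j, and c ∈ S_k with c ≠ 0; write c = γ² + γ with γ ∈ G_k. For τ ∈ F_{q^2} let τ_0, τ_1, τ_2 satisfy τ_0² = c·r/(r+1) (when r ≠ 1), τ_1² = γ·r, τ_2² = (γ+1)·r. Then for τ ∈ G_r with τ ≠ 0: (a) c/τ² ∈ G_0 = F_q if and only if r = 0, or r ∉ {0,1} and τ = τ_0; (b) c/τ² ∈ G_1 if and only if r ≠ 0 and τ ∈ {τ_1, τ_2}. -/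
/-- Let `q` be an even prime power and `K = F_{q²} ⊇ F_q`.
Let `i, j ∈ F₂ = {0,1}`, `k ∈ F_q` (i.e. `k^q = k`), `r = k + i + j`, and
`c ∈ S_k \ {0}`, written `c = γ² + γ` with `γ ∈ G_k` (`G_s = {x : x^q + x = s}`,
`S_s` its image under `x ↦ x² + x`). Let `τ₀, τ₁, τ₂` satisfy `τ₀² = c·r/(r+1)`
(when `r ≠ 1`), `τ₁² = γ·r`, `τ₂² = (γ+1)·r`. Then for `τ ∈ G_r`, `τ ≠ 0`:
(a) `c/τ² ∈ G₀ = F_q` iff `r = 0`, or `r ∉ {0,1}` and `τ = τ₀`;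
(b) `c/τ² ∈ G₁` iff `r ≠ 0` and `τ ∈ {τ₁, τ₂}`. -/
theorem tau_c_criterion
    (q m : ℕ) (hm : 0 < m) (hq : q = 2 ^ m)
    (K : Type*) [Field K] [Fintype K] (hK : Fintype.card K = q ^ 2)
    (i j : K) (hi : i = 0 ∨ i = 1) (hj : j = 0 ∨ j = 1)
    (k : K) (hk : k ^ q = k)
    (r : K) (hr : r = k + i + j)
    (γ c : K) (hγ : γ ^ q + γ = k) (hc : c = γ ^ 2 + γ) (hc0 : c ≠ 0)
    (τ0 τ1 τ2 : K)
    (hτ0 : r ≠ 1 → τ0 ^ 2 = c * r / (r + 1))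
    (hτ1 : τ1 ^ 2 = γ * r) (hτ2 : τ2 ^ 2 = (γ + 1) * r)
    (τ : K) (hτ : τ ^ q + τ = r) (hτne : τ ≠ 0) :
    ((c / τ ^ 2) ^ q + c / τ ^ 2 = 0 ↔
      (r = 0 ∨ (r ≠ 0 ∧ r ≠ 1 ∧ τ = τ0))) ∧
    ((c / τ ^ 2) ^ q + c / τ ^ 2 = 1 ↔
      (r ≠ 0 ∧ (τ = τ1 ∨ τ = τ2))) := by
  -- characteristic 2
  have h2 : (2 : K) = 0 := by
    have h := Nat.cast_card_eq_zero K
    rw [hK, hq] at h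
    push_cast at h
    have h' : (2 : K) ^ (m * 2) = 0 := by rw [pow_mul]; exact h
    have hm2 : m * 2 ≠ 0 := by positivity
    exact (pow_eq_zero_iff hm2).mp h'
  haveI hchar : CharP K 2 := by
    obtain ⟨p, hp⟩ := CharP.exists K
    have hdvd : p ∣ 2 := (CharP.cast_eq_zero_iff K p 2).mp h2
    have hne : p ≠ 1 := CharP.char_ne_one K p
    rcases (Nat.Prime.eq_one_or_self_of_dvd Nat.prime_two p hdvd) with h | h
    · exact absurd h hne
    · rwa [h] at hp
  haveI : Fact (Nat.Prime 2) := ⟨Nat.prime_two⟩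
  have hfrob : ∀ a b : K, (a + b) ^ q = a ^ q + b ^ q := by
    intro a b; rw [hq]; exact add_pow_char_pow ..
  have hsqinj : ∀ a b : K, a ^ 2 = b ^ 2 → a = b := by
    intro a b hab
    have := frobenius_inj K 2 (a₁ := a) (a₂ := b)
    simp only [frobenius_def] at this
    exact this hab
  -- basic identities
  have hii : i ^ 2 = i := by rcases hi with h | h <;> subst h <;> ring
  have hjj : j ^ 2 = j := by rcases hj with h | h <;> subst h <;> ring
  have hkey : r ^ 2 + r = k ^ 2 + k := by
    subst hr
    linear_combination hii + hjj + (k * i + k * j + i * j + i + j) * h2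
  have hγq : γ ^ q = γ + k := by linear_combination hγ - γ * h2
  have hτq : τ ^ q = τ + r := by linear_combination hτ - τ * h2
  have hpow2q : ∀ a : K, (a ^ 2) ^ q = (a ^ q) ^ 2 := by
    intro a; rw [← pow_mul, mul_comm, pow_mul]
  have hcq : c ^ q = c + r ^ 2 + r := by
    rw [hc, hfrob, hpow2q, hγq]
    linear_combination hkey + γ * k * h2 + γ * h2 + (-γ + k + k ^ 2 - r - r ^ 2) * h2
  have hτpow : τ ^ 2 ≠ 0 := pow_ne_zero 2 hτne
  have hτr : τ + r ≠ 0 := by rw [← hτq]; exact pow_ne_zero q hτne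
  have hτr2 : (τ + r) ^ 2 ≠ 0 := pow_ne_zero 2 hτr
  have hden : τ ^ 2 * (τ + r) ^ 2 ≠ 0 := mul_ne_zero hτpow hτr2
  have hexpand : (c / τ ^ 2) ^ q + c / τ ^ 2
      = ((r ^ 2 + r) * τ ^ 2 + c * r ^ 2) / (τ ^ 2 * (τ + r) ^ 2) := by
    rw [div_pow, hpow2q, hτq, hcq]
    rw [div_add_div _ _ hτr2 hτpow, mul_comm ((τ + r) ^ 2) (τ ^ 2)]
    congr 1
    linear_combination (c * τ ^ 2 + c * τ * r) * h2
  constructor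
  · rw [hexpand, div_eq_zero_iff]
    constructor
    · rintro (h | h)
      · by_cases hr0 : r = 0
        · exact Or.inl hr0
        · by_cases hr1 : r = 1
          · exfalso; apply hc0
            have hcr : c * r ^ 2 = 0 := by
              rw [hr1] at h ⊢; linear_combination h - τ ^ 2 * h2
            rcases mul_eq_zero.mp hcr with h' | h'
            · exact h'
            · exact absurd h' (pow_ne_zero 2 hr0)
          · refine Or.inr ⟨hr0, hr1, ?_⟩
            apply hsqinj
            rw [hτ0 hr1]
            have hr1' : r + 1 ≠ 0 := by
              intro h'; apply hr1; linear_combination h' - h2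
            rw [eq_div_iff hr1']
            have hcancel : r * (τ ^ 2 * (r + 1)) = r * (c * r) := by
              linear_combination h - c * r ^ 2 * h2
            exact mul_left_cancel₀ hr0 hcancel
      · exact absurd h hden
    · rintro (h | ⟨hr0, hr1, hτ0'⟩)
      · left; rw [h]; ring
      · left
        have ht0 := hτ0 hr1
        have hr1' : r + 1 ≠ 0 := by
          intro h'; apply hr1; linear_combination h' - h2
        have hτsq : τ ^ 2 * (r + 1) = c * r := by
          rw [hτ0', ht0]; field_simp
        linear_combination r * hτsq + c * r ^ 2 * h2
  · rw [hexpand, div_eq_one_iff_eq hden]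
    have hfact0 : ∀ t : K, (r ^ 2 + r) * t ^ 2 + c * r ^ 2 + t ^ 2 * (t + r) ^ 2
        = (t ^ 2 + γ * r) * (t ^ 2 + (γ + 1) * r) := fun t => by
      linear_combination r ^ 2 * hc + (r ^ 2 * t ^ 2 + t ^ 3 * r - γ * r * t ^ 2) * h2
    have hfact := hfact0 τ
    constructor
    · intro h
      have heq : (τ ^ 2 + γ * r) * (τ ^ 2 + (γ + 1) * r) = 0 := by
        linear_combination h - hfact - τ ^ 2 * (τ + r) ^ 2 * h2 + (2 * τ ^ 2 * r ^ 2 + 4 * τ ^ 3 * r + 2 * τ ^ 4) * h2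
      have hr0 : r ≠ 0 := by
        intro hr0
        rw [hr0] at heq
        apply hτne
        apply hsqinj τ 0
        have h4 : (τ ^ 2) ^ 2 = 0 := by linear_combination heq
        have := pow_eq_zero_iff (n := 2) (by norm_num) |>.mp h4
        simpa using this
      refine ⟨hr0, ?_⟩
      rcases mul_eq_zero.mp heq with h' | h'
      · left; apply hsqinj; rw [hτ1]; linear_combination h' - γ * r * h2
      · right; apply hsqinj; rw [hτ2]; linear_combination h' - (γ + 1) * r * h2
    · rintro ⟨hr0, hτ' | hτ'⟩
      · rw [hτ']
        linear_combination hfact0 τ1 + hτ1 * (2 * τ1 ^ 2 + r) + γ * r ^ 2 * h2 - hτ1 * (τ1 ^ 2 + γ * r) + (-τ1 ^ 4 + 2 * γ * r * τ1 ^ 2 - 2 * r * τ1 ^ 3 - r ^ 2 * τ1 ^ 2) * h2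
      · rw [hτ']
        linear_combination hfact0 τ2 + hτ2 * (2 * τ2 ^ 2 + r) + (γ + 1) * r ^ 2 * h2 - hτ2 * (τ2 ^ 2 + (γ + 1) * r) + (r * τ2 ^ 2 + 2 * γ * r * τ2 ^ 2 - 2 * r * τ2 ^ 3 - r ^ 2 * τ2 ^ 2 - τ2 ^ 4 - r ^ 2 - γ * r ^ 2) * h2
end

section
/- Let q be a prime power and B_1 = {x ∈ F_{q^2} \ {1} : x^q = x^{-1}}. If α, β ∈ F_q ∪ {∞} with α ≠ β and ξ ∈ F_{q^2} \ F_q, then the cross-ratio ρ(ξ, ξ^q, α, β) lies in B_1. -/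
private lemma aux_factor_ne {K : Type*} [Field K] (q : ℕ) (x y c0 c1 : K)
    (hx : x ^ q = y) (hne : x ≠ y) (hR : c0 ^ q * c1 = c0 * c1 ^ q)
    (hc : c0 ≠ 0 ∨ c1 ≠ 0) : x * c1 - c0 ≠ 0 := by
  intro h
  have hx1 : x * c1 = c0 := sub_eq_zero.mp h
  by_cases hc1 : c1 = 0
  · have hc0 : c0 = 0 := by rw [← hx1, hc1, mul_zero]
    rcases hc with h' | h' <;> [exact h' hc0; exact h' hc1]
  · have h2 : y * c1 ^ q = c0 ^ q := by rw [← hx, ← mul_pow, hx1]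
    have h3 : (y - x) * (c1 ^ q * c1) = 0 := by
      linear_combination c1 * h2 - c1 ^ q * hx1 + hR
    rcases mul_eq_zero.mp h3 with h4 | h4
    · exact hne ((sub_eq_zero.mp h4).symm)
    · exact (mul_ne_zero (pow_ne_zero q hc1) hc1) h4

/-- Let `q` be a prime power, `K = F_{q²} ⊇ F_q`, and
`B₁ = {x ∈ K \ {1} : x^{q+1} = 1}` (i.e. `x^q = x⁻¹`). Let `α ≠ β` be two points of
`F_q ∪ {∞} ⊆ ℙ¹(K)`, given by nonzero homogeneous coordinate vectors `a, b` fixed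
(projectively) by the Frobenius `x ↦ x^q`, and let `ξ ∈ K \ F_q`. Then the
cross-ratio `ρ(ξ, ξ^q, α, β) = ((ξ−α)(ξ^q−β))/((ξ−β)(ξ^q−α))`, whose homogeneous
coordinates are `n = (ξ·a₁ − a₀)(ξ^q·b₁ − b₀)` and `d = (ξ·b₁ − b₀)(ξ^q·a₁ − a₀)`,
lies in `B₁`: `n, d ≠ 0`, `n ≠ d` (`ρ ≠ 1`), and `n^{q+1} = d^{q+1}` (`ρ^{q+1} = 1`). -/
theorem crossRatio_mixed_mem_B1
    (q : ℕ) (hq : ∃ p n : ℕ, p.Prime ∧ 0 < n ∧ q = p ^ n)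
    (K : Type*) [Field K] [Fintype K] (hK : Fintype.card K = q ^ 2)
    (ξ : K) (hξ : ξ ^ q ≠ ξ)
    (a b : Fin 2 → K) (ha : a ≠ 0) (hb : b ≠ 0)
    (haR : (a 0) ^ q * a 1 = a 0 * (a 1) ^ q)
    (hbR : (b 0) ^ q * b 1 = b 0 * (b 1) ^ q)
    (hab : a 0 * b 1 ≠ a 1 * b 0) :
    (ξ * a 1 - a 0) * (ξ ^ q * b 1 - b 0) ≠ 0 ∧
    (ξ * b 1 - b 0) * (ξ ^ q * a 1 - a 0) ≠ 0 ∧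
    (ξ * a 1 - a 0) * (ξ ^ q * b 1 - b 0) ≠ (ξ * b 1 - b 0) * (ξ ^ q * a 1 - a 0) ∧
    ((ξ * a 1 - a 0) * (ξ ^ q * b 1 - b 0)) ^ (q + 1) =
      ((ξ * b 1 - b 0) * (ξ ^ q * a 1 - a 0)) ^ (q + 1) := by
  -- basic facts
  have hxi2 : (ξ ^ q) ^ q = ξ := by
    rw [← pow_mul, ← sq, ← hK, FiniteField.pow_card]
  have hca : a 0 ≠ 0 ∨ a 1 ≠ 0 := by
    by_contra hc
    push_neg at hc
    exact ha (funext fun i => by fin_cases i <;> simp [hc.1, hc.2])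
  have hcb : b 0 ≠ 0 ∨ b 1 ≠ 0 := by
    by_contra hc
    push_neg at hc
    exact hb (funext fun i => by fin_cases i <;> simp [hc.1, hc.2])
  have h1 : ξ * a 1 - a 0 ≠ 0 := aux_factor_ne q ξ (ξ ^ q) _ _ rfl (Ne.symm hξ) haR hca
  have h2 : ξ ^ q * b 1 - b 0 ≠ 0 := aux_factor_ne q (ξ ^ q) ξ _ _ hxi2 hξ hbR hcb
  have h3 : ξ * b 1 - b 0 ≠ 0 := aux_factor_ne q ξ (ξ ^ q) _ _ rfl (Ne.symm hξ) hbR hcb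
  have h4 : ξ ^ q * a 1 - a 0 ≠ 0 := aux_factor_ne q (ξ ^ q) ξ _ _ hxi2 hξ haR hca
  refine ⟨mul_ne_zero h1 h2, mul_ne_zero h3 h4, ?_, ?_⟩
  · intro h
    have h5 : (ξ - ξ ^ q) * (a 0 * b 1 - a 1 * b 0) = 0 := by linear_combination h
    rcases mul_eq_zero.mp h5 with h6 | h6
    · exact hξ (sub_eq_zero.mp h6).symm
    · exact hab (sub_eq_zero.mp h6)
  · -- characteristic setup
    obtain ⟨p, m, hp, hm, rfl⟩ := hq
    obtain ⟨p', hp'⟩ := CharP.exists K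
    have hp'prime : p'.Prime := CharP.char_is_prime K p'
    obtain ⟨n', hn'⟩ := FiniteField.card K p'
    have hpp' : p' = p := by
      have : p' ∣ (p ^ m) ^ 2 := by
        rw [← hK, hn'.2]
        exact dvd_pow_self p' n'.2.ne'
      rw [← pow_mul] at this
      exact (Nat.prime_dvd_prime_iff_eq hp'prime hp).mp
        (hp'prime.dvd_of_dvd_pow this)
    subst hpp'
    haveI : ExpChar K p' := ExpChar.prime hp
    have hsub : ∀ x y : K, (x - y) ^ p' ^ m = x ^ p' ^ m - y ^ p' ^ m := fun x y => by
      simpa [iterateFrobenius_def] using map_sub (iterateFrobenius K p' m) x y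
    set Q := p' ^ m with hQ
    have hnq : ((ξ * a 1 - a 0) * (ξ ^ Q * b 1 - b 0)) ^ Q =
        (ξ ^ Q * a 1 ^ Q - a 0 ^ Q) * (ξ * b 1 ^ Q - b 0 ^ Q) := by
      rw [mul_pow, hsub, hsub, mul_pow, mul_pow, hxi2]
    have hdq : ((ξ * b 1 - b 0) * (ξ ^ Q * a 1 - a 0)) ^ Q =
        (ξ ^ Q * b 1 ^ Q - b 0 ^ Q) * (ξ * a 1 ^ Q - a 0 ^ Q) := by
      rw [mul_pow, hsub, hsub, mul_pow, mul_pow, hxi2]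
    have hA : (ξ * a 1 - a 0) * (ξ ^ Q * a 1 ^ Q - a 0 ^ Q) =
        (ξ ^ Q * a 1 - a 0) * (ξ * a 1 ^ Q - a 0 ^ Q) := by
      linear_combination (ξ ^ Q - ξ) * haR
    have hB : (ξ ^ Q * b 1 - b 0) * (ξ * b 1 ^ Q - b 0 ^ Q) =
        (ξ * b 1 - b 0) * (ξ ^ Q * b 1 ^ Q - b 0 ^ Q) := by
      linear_combination (ξ - ξ ^ Q) * hbR
    calc ((ξ * a 1 - a 0) * (ξ ^ Q * b 1 - b 0)) ^ (Q + 1)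
        = ((ξ * a 1 - a 0) * (ξ ^ Q * a 1 ^ Q - a 0 ^ Q)) *
          ((ξ ^ Q * b 1 - b 0) * (ξ * b 1 ^ Q - b 0 ^ Q)) := by
          rw [pow_succ, hnq]; ring
      _ = ((ξ ^ Q * a 1 - a 0) * (ξ * a 1 ^ Q - a 0 ^ Q)) *
          ((ξ * b 1 - b 0) * (ξ ^ Q * b 1 ^ Q - b 0 ^ Q)) := by rw [hA, hB]
      _ = ((ξ * b 1 - b 0) * (ξ ^ Q * a 1 - a 0)) ^ (Q + 1) := by
          rw [pow_succ, hdq]; ring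
end

section
/- Let q be a prime power and fix ξ ∈ F_{q^2} \ F_q. For each λ ∈ F_q \ {0,1}, the number of x ∈ F_{q^2} \ F_q satisfying λ·(ξ − x^q)(ξ^q − x) = (ξ − x)(ξ^q − x^q) equals q + 1, and the equation has no solutions x ∈ F_{q^2} \ F_q with λ ∉ F_q. -/
open Polynomial

/-- Let `q` be a prime power, `K = F_{q²} ⊇ F_q`, and fix
`ξ ∈ K \ F_q`. For `λ ∈ K`, `λ ≠ 1`, consider the number `N(λ)` of `x ∈ K \ F_q`
with `x ≠ ξ, ξ^q` satisfying `λ·(ξ − x^q)(ξ^q − x) = (ξ − x)(ξ^q − x^q)` (i.e. the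
cross-ratio `ρ(ξ, ξ^q, x, x^q)` equals `λ`). Then `N(λ) = q + 1` for every
`λ ∈ F_q \ {0, 1}`, and `N(λ) = 0` whenever `λ ∉ F_q`. -/
theorem count_elliptic_crossRatio_solutions
    (q : ℕ) (hq : ∃ p n : ℕ, p.Prime ∧ 0 < n ∧ q = p ^ n)
    (K : Type*) [Field K] [Fintype K] (hK : Fintype.card K = q ^ 2)
    (ξ : K) (hξ : ξ ^ q ≠ ξ)
    (lam : K) (hlam1 : lam ≠ 1) :
    (lam ^ q = lam → lam ≠ 0 →
      ({x : K | x ^ q ≠ x ∧ x ≠ ξ ∧ x ≠ ξ ^ q ∧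
        lam * ((ξ - x ^ q) * (ξ ^ q - x)) = (ξ - x) * (ξ ^ q - x ^ q)}).ncard = q + 1) ∧
    (lam ^ q ≠ lam →
      ({x : K | x ^ q ≠ x ∧ x ≠ ξ ∧ x ≠ ξ ^ q ∧
        lam * ((ξ - x ^ q) * (ξ ^ q - x)) = (ξ - x) * (ξ ^ q - x ^ q)}).ncard = 0) := by
  classical
  obtain ⟨p, n, hp, hn, hqpn⟩ := hq
  haveI hfp : Fact p.Prime := ⟨hp⟩
  have hq2 : 2 ≤ q := by
    rw [hqpn]; exact Nat.one_lt_pow hn.ne' hp.one_lt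
  -- characteristic
  haveI hcharp : CharP K p := by
    haveI h1 := ringChar.charP K
    obtain ⟨m, hrp, hcard⟩ := FiniteField.card K (ringChar K)
    have hco : ringChar K ^ (m : ℕ) = p ^ (n * 2) := by
      rw [← hcard, hK, hqpn, ← pow_mul]
    have hdvd : ringChar K ∣ p ^ (n * 2) :=
      hco ▸ dvd_pow_self _ (by exact_mod_cast m.pos.ne' : (m : ℕ) ≠ 0)
    have : ringChar K = p :=
      ((Nat.prime_dvd_prime_iff_eq hrp hp).mp (hrp.dvd_of_dvd_pow hdvd))
    rwa [this] at h1
  have frob : ∀ a b : K, (a - b) ^ q = a ^ q - b ^ q := by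
    intro a b; rw [hqpn]; exact sub_pow_char_pow a b n
  have powq : ∀ a : K, (a ^ q) ^ q = a := by
    intro a
    rw [← pow_mul, ← pow_two, ← hK]
    exact FiniteField.pow_card a
  have hξξ : ξ ^ q - ξ ≠ 0 := sub_ne_zero.mpr hξ
  constructor
  · -- main count
    intro hlq hl0
    -- lam ^ (q-1) = 1
    have hl : lam ^ (q - 1) = 1 := by
      have h1 : lam ^ (q - 1) * lam = lam := by
        rw [← pow_succ, Nat.sub_add_cancel (by omega), hlq]
      exact mul_right_cancel₀ hl0 (by rw [h1, one_mul])
    obtain ⟨g, hg⟩ := IsCyclic.exists_monoid_generator (α := Kˣ)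
    have hcardU : Fintype.card Kˣ = q ^ 2 - 1 := by
      rw [Fintype.card_units, hK]
    have horder : orderOf g = q ^ 2 - 1 := by
      rw [orderOf_eq_card_of_forall_mem_zpowers
        (fun x => mem_powers_iff_mem_zpowers.mp (hg x))]
      rw [Nat.card_eq_fintype_card]
      exact hcardU
    have h1q : 1 ≤ q := by omega
    have h1q2 : 1 ≤ q ^ 2 := Nat.one_le_pow _ _ (by omega)
    have hfact : (q + 1) * (q - 1) = q ^ 2 - 1 := by
      zify [h1q, h1q2]; ring
    set u : Kˣ := Units.mk0 lam hl0 with hudef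
    have hu : u ^ (q - 1) = 1 := by
      ext
      rw [Units.val_pow_eq_pow_val, Units.val_one]
      exact hl
    obtain ⟨k, hk0⟩ := hg u
    have hk : g ^ k = u := hk0
    have hdvd : q ^ 2 - 1 ∣ k * (q - 1) := by
      rw [← horder]
      apply orderOf_dvd_of_pow_eq_one
      rw [pow_mul, hk, hu]
    have hdvd2 : q + 1 ∣ k := by
      rw [← hfact] at hdvd
      exact (Nat.mul_dvd_mul_iff_right (show 0 < q - 1 by omega)).mp hdvd
    obtain ⟨j, hj⟩ := hdvd2
    have hexists : ∃ α : K, α ^ (q + 1) = lam := by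
      refine ⟨((g ^ j : Kˣ) : K), ?_⟩
      rw [← Units.val_pow_eq_pow_val, ← pow_mul, mul_comm j (q + 1), ← hj, hk]
      rfl
    -- primitive (q+1)-th root of unity
    have hordζ : orderOf (g ^ (q - 1)) = q + 1 := by
      rw [orderOf_pow, horder,
        Nat.gcd_eq_right ⟨q + 1, by rw [← hfact]; ring⟩,
        ← hfact, Nat.mul_div_cancel _ (show 0 < q - 1 by omega)]
    have hζ : IsPrimitiveRoot (((g ^ (q - 1) : Kˣ)) : K) (q + 1) := by
      have h2 := IsPrimitiveRoot.orderOf (g ^ (q - 1))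
      rw [hordζ] at h2
      exact IsPrimitiveRoot.coe_units_iff.mpr h2
    -- ncard of the target set
    have hTcard : ({y : K | y ^ (q + 1) = lam}).ncard = q + 1 := by
      have hset : {y : K | y ^ (q + 1) = lam}
          = ↑((nthRoots (q + 1) lam).toFinset) := by
        ext y
        simp [Polynomial.mem_nthRoots (Nat.succ_pos q)]
      rw [hset, Set.ncard_coe_finset,
        Multiset.toFinset_card_of_nodup (hζ.nthRoots_nodup hl0),
        hζ.card_nthRoots lam, if_pos hexists]
    -- the bijection
    set S := {x : K | x ^ q ≠ x ∧ x ≠ ξ ∧ x ≠ ξ ^ q ∧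
        lam * ((ξ - x ^ q) * (ξ ^ q - x)) = (ξ - x) * (ξ ^ q - x ^ q)} with hSdef
    set T := {y : K | y ^ (q + 1) = lam} with hTdef
    set f : K → K := fun x => (ξ - x) / (ξ ^ q - x) with hfdef
    set gg : K → K := fun y => (ξ - y * ξ ^ q) / (1 - y) with hggdef
    have hmapsf : Set.MapsTo f S T := by
      rintro x ⟨hx1, hx2, hx3, heq⟩
      have ha0 : ξ ^ q - x ≠ 0 := sub_ne_zero.mpr (Ne.symm hx3)
      have heq' : lam * ((ξ ^ q - x) ^ q * (ξ ^ q - x)) = (ξ - x) * (ξ - x) ^ q := by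
        rw [frob, frob, powq]; exact heq
      show ((ξ - x) / (ξ ^ q - x)) ^ (q + 1) = lam
      rw [div_pow, div_eq_iff (pow_ne_zero _ ha0), pow_succ, pow_succ]
      linear_combination -heq'
    have hgfacts : ∀ y : K, y ∈ T →
        (ξ ^ q - gg y = (ξ ^ q - ξ) / (1 - y)) ∧ (ξ - gg y = y * (ξ ^ q - gg y)) ∧
        (1 : K) - y ≠ 0 ∧ y ≠ 0 := by
      intro y hy
      have hy' : y ^ (q + 1) = lam := hy
      have hy1 : y ≠ 1 := fun h => hlam1 (by rw [← hy', h, one_pow])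
      have hy0 : y ≠ 0 := fun h => hl0 (by rw [← hy', h, zero_pow (Nat.succ_ne_zero q)])
      have hd0 : (1 : K) - y ≠ 0 := sub_ne_zero.mpr (Ne.symm hy1)
      have hA : ξ ^ q - gg y = (ξ ^ q - ξ) / (1 - y) := by
        show ξ ^ q - (ξ - y * ξ ^ q) / (1 - y) = (ξ ^ q - ξ) / (1 - y)
        field_simp
        ring
      refine ⟨hA, ?_, hd0, hy0⟩
      rw [hA]
      show ξ - (ξ - y * ξ ^ q) / (1 - y) = y * ((ξ ^ q - ξ) / (1 - y))
      field_simp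
      ring
    have hmapsg : Set.MapsTo gg T S := by
      intro y hy
      obtain ⟨hA, hBA, hd0, hy0⟩ := hgfacts y hy
      have hy' : y ^ (q + 1) = lam := hy
      have ha0 : ξ ^ q - gg y ≠ 0 := by
        rw [hA]; exact div_ne_zero hξξ hd0
      have hb0 : ξ - gg y ≠ 0 := by
        rw [hBA]; exact mul_ne_zero hy0 ha0
      have heq' : lam * ((ξ ^ q - gg y) ^ q * (ξ ^ q - gg y))
          = (ξ - gg y) * (ξ - gg y) ^ q := by
        rw [hBA, mul_pow, ← hy']
        ring
      have heqS : lam * ((ξ - (gg y) ^ q) * (ξ ^ q - gg y))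
          = (ξ - gg y) * (ξ ^ q - (gg y) ^ q) := by
        rw [frob, frob, powq] at heq'
        exact heq'
      refine ⟨?_, fun h => hb0 (by rw [h, sub_self]),
        fun h => ha0 (by rw [h, sub_self]), heqS⟩
      intro hfix
      have e1 : (ξ ^ q - gg y) ^ q = ξ - gg y := by rw [frob, powq, hfix]
      have e2 : (ξ - gg y) ^ q = ξ ^ q - gg y := by rw [frob, hfix]
      rw [e1, e2] at heq'
      have hc : (ξ - gg y) * (ξ ^ q - gg y) ≠ 0 := mul_ne_zero hb0 ha0
      exact hlam1 (mul_right_cancel₀ hc (by rw [heq', one_mul]))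
    have hleft : Set.LeftInvOn gg f S := by
      rintro x ⟨hx1, hx2, hx3, heq⟩
      have ha0 : ξ ^ q - x ≠ 0 := sub_ne_zero.mpr (Ne.symm hx3)
      have hd' : 1 - (ξ - x) / (ξ ^ q - x) ≠ 0 := by
        rw [one_sub_div ha0]
        exact div_ne_zero (fun h => hξξ (by linear_combination h)) ha0
      show (ξ - (ξ - x) / (ξ ^ q - x) * ξ ^ q) / (1 - (ξ - x) / (ξ ^ q - x)) = x
      rw [div_eq_iff hd']
      field_simp
      ring
    have hright : Set.RightInvOn gg f T := by
      intro y hy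
      obtain ⟨hA, hBA, hd0, hy0⟩ := hgfacts y hy
      have ha0 : ξ ^ q - gg y ≠ 0 := by
        rw [hA]; exact div_ne_zero hξξ hd0
      show (ξ - gg y) / (ξ ^ q - gg y) = y
      rw [hBA, mul_div_assoc, div_self ha0, mul_one]
    have hbij : Set.BijOn f S T := Set.InvOn.bijOn ⟨hleft, hright⟩ hmapsf hmapsg
    calc S.ncard = (f '' S).ncard := (Set.ncard_image_of_injOn hbij.injOn).symm
      _ = T.ncard := by rw [hbij.image_eq]
      _ = q + 1 := hTcard
  · -- no solutions when lam ∉ F_q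
    intro hlq
    have hempty : {x : K | x ^ q ≠ x ∧ x ≠ ξ ∧ x ≠ ξ ^ q ∧
        lam * ((ξ - x ^ q) * (ξ ^ q - x)) = (ξ - x) * (ξ ^ q - x ^ q)} = ∅ := by
      ext x
      simp only [Set.mem_setOf_eq, Set.mem_empty_iff_false, iff_false, not_and]
      intro hx1 hx2 hx3 heq
      apply hlq
      have ha0 : ξ ^ q - x ≠ 0 := sub_ne_zero.mpr (Ne.symm hx3)
      have heq' : lam * ((ξ ^ q - x) ^ q * (ξ ^ q - x)) = (ξ - x) * (ξ - x) ^ q := by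
        rw [frob, frob, powq]; exact heq
      have h3 : (lam * ((ξ ^ q - x) ^ q * (ξ ^ q - x))) ^ q
          = ((ξ - x) * (ξ - x) ^ q) ^ q := by rw [heq']
      rw [mul_pow, mul_pow, mul_pow, powq, powq] at h3
      have key : lam ^ q * ((ξ ^ q - x) ^ q * (ξ ^ q - x))
          = lam * ((ξ ^ q - x) ^ q * (ξ ^ q - x)) := by
        rw [heq']
        linear_combination h3
      exact mul_right_cancel₀ (mul_ne_zero (pow_ne_zero q ha0) ha0) key
    rw [hempty]
    simp
end

section
/- Let q = 2^r be an even prime power, a, b, c ∈ F_q with c ≠ 0 and a + b + c of absolute trace 0, and fix v ∈ F_q of absolute trace e. Then the number of pairs (x,y) ∈ F_q² satisfying both (√v·(x+y))² + √v·(x+y) + xy + v = a and (√(v+c)·(x+y))² + √(v+c)·(x+y) + xy + v + c = b equals Σ_τ |{z ∈ F_q ∪ {∞} : z² + z = v + a c/τ²}|, where τ ranges over the two elements of F_q with τ² + τ = a + b + c (with the convention that for τ = 0, z = ∞ is the unique solution). -/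
/-!
Adding the two equations and using `√v + √(v+c) = √c` (characteristic 2) shows that
`τ := √c (x + y)` satisfies `τ² + τ = a + b + c`, and on the fibre of a given `τ` the first
equation fixes `xy`. So each fibre consists of the pairs with prescribed sum `s = τ/√c` and
product. For `s = 0` there is exactly one such pair `(√(xy), √(xy))`; for `s ≠ 0`, `x ↦ x/s`
identifies them with the roots of an Artin–Schreier equation `z² + z = xy/s²`, and the shift
`z ↦ z + √v/s` turns its right-hand side into `v + ac/τ²`.
-/

open scoped Classical

theorem Set.ncard_eq_sum_ncard_fiber {α β : Type*} [Finite α] {s : Set α} {t : Finset β}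
    {f : α → β} (h : Set.MapsTo f s t) : s.ncard = ∑ b ∈ t, {x ∈ s | f x = b}.ncard := by
  have := Fintype.ofFinite α
  rw [Set.ncard_eq_toFinset_card' s,
    Finset.card_eq_sum_card_fiberwise fun x hx => h (Set.mem_toFinset.1 hx)]
  refine Finset.sum_congr rfl fun b _ => ?_
  rw [Set.ncard_eq_toFinset_card']
  congr 1
  ext x
  simp

def intersectionPairs {R : Type*} [CommRing R] (a b c v sv svc : R) : Set (R × R) :=
  {p | (sv * (p.1 + p.2)) ^ 2 + sv * (p.1 + p.2) + p.1 * p.2 + v = a ∧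
    (svc * (p.1 + p.2)) ^ 2 + svc * (p.1 + p.2) + p.1 * p.2 + v + c = b}

section CommRing

variable {R : Type*} [CommRing R] [CharP R 2]

theorem ncard_setOf_sq_add_self_eq_add (t w : R) :
    {z : R | z ^ 2 + z = t + (w ^ 2 + w)}.ncard = {z : R | z ^ 2 + z = t}.ncard := by
  have hshift : {z : R | z ^ 2 + z = t + (w ^ 2 + w)} = (· + w) ⁻¹' {z | z ^ 2 + z = t} := by
    ext z
    rw [Set.mem_preimage, Set.mem_ofPred_eq, Set.mem_ofPred_eq,
      show (z + w) ^ 2 + (z + w) = z ^ 2 + z + (w ^ 2 + w) by rw [CharTwo.add_sq]; ring]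
    exact CharTwo.add_eq_iff_eq_add.symm
  rw [hshift, Set.ncard_preimage_of_injective_subset_range (add_left_injective w)
    fun z _ => add_right_surjective w z]

theorem ncard_setOf_add_eq_zero_mul_eq [NoZeroDivisors R] [Finite R] (m : R) :
    {p : R × R | p.1 + p.2 = 0 ∧ p.1 * p.2 = m}.ncard = 1 := by
  obtain ⟨x, hx : x ^ 2 = m⟩ := Finite.surjective_of_injective (CharTwo.sq_injective (R := R)) m
  rw [Set.ncard_eq_one]
  refine ⟨(x, x), ?_⟩
  ext ⟨y, y'⟩
  simp only [Set.mem_ofPred_eq, Set.mem_singleton_iff, Prod.mk.injEq, CharTwo.add_eq_zero]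
  constructor
  · rintro ⟨rfl, hm⟩
    have : y = x := CharTwo.sq_injective (show y ^ 2 = x ^ 2 by rw [hx, ← hm, sq])
    exact ⟨this, this⟩
  · rintro ⟨rfl, rfl⟩
    exact ⟨rfl, by rw [← hx, sq]⟩

theorem sq_add_eq_of_sq_eq_add {sv svc v c : R} (hsv : sv ^ 2 = v) (hsvc : svc ^ 2 = v + c) :
    (sv + svc) ^ 2 = c := by
  rw [CharTwo.add_sq, hsv, hsvc, CharTwo.add_cancel_left]

theorem mem_intersectionPairs_iff {a b c v sv svc : R} (hsv : sv ^ 2 = v) (p : R × R) :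
    p ∈ intersectionPairs a b c v sv svc ↔
      p.1 * p.2 = a + v + sv * (p.1 + p.2) + v * (p.1 + p.2) ^ 2 ∧
      ((sv + svc) * (p.1 + p.2)) ^ 2 + (sv + svc) * (p.1 + p.2) = a + b + c := by
  have htwo : (2 : R) = 0 := CharTwo.two_eq_zero
  set s := p.1 + p.2
  constructor
  · rintro ⟨hfst, hsnd⟩
    exact ⟨by linear_combination hfst - s ^ 2 * hsv - (v * s ^ 2 + sv * s + v) * htwo,
      by linear_combination hfst + hsnd + (sv * svc * s ^ 2 - p.1 * p.2 - v - c) * htwo⟩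
  · rintro ⟨hprod, hτ⟩
    exact ⟨by linear_combination hprod + s ^ 2 * hsv + (sv * s + v * s ^ 2 + v) * htwo,
      by linear_combination hτ + hprod - s ^ 2 * hsv + (a + v + c - sv * svc * s ^ 2) * htwo⟩

end CommRing

section Field

variable {F : Type*} [Field F] [CharP F 2]

theorem ncard_setOf_add_eq_mul_eq_of_ne_zero {s : F} (hs : s ≠ 0) (m : F) :
    {p : F × F | p.1 + p.2 = s ∧ p.1 * p.2 = m}.ncard =
      {z : F | z ^ 2 + z = m / s ^ 2}.ncard := by
  have himage : {p : F × F | p.1 + p.2 = s ∧ p.1 * p.2 = m} =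
      (fun z => (s * z, s * z + s)) '' {z : F | z ^ 2 + z = m / s ^ 2} := by
    ext ⟨x, y⟩
    simp only [Set.mem_ofPred_eq, Set.mem_image, Prod.mk.injEq]
    constructor
    · rintro ⟨hsum, hprod⟩
      obtain rfl : y = x + s := by rw [← hsum, CharTwo.add_cancel_left]
      refine ⟨x / s, ?_, by field_simp, by field_simp⟩
      field_simp
      linear_combination hprod
    · rintro ⟨z, hz, rfl, rfl⟩
      refine ⟨CharTwo.add_cancel_left _ _, ?_⟩
      field_simp at hz
      linear_combination hz
  rw [himage,
    Set.ncard_image_of_injective _ fun z z' h => mul_left_cancel₀ hs (Prod.ext_iff.1 h).1]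

variable {a b c v sv svc τ : F}

theorem intersectionPairs_fiber_eq (hsv : sv ^ 2 = v) (hsc : sv + svc ≠ 0)
    (hτ : τ ^ 2 + τ = a + b + c) :
    {p ∈ intersectionPairs a b c v sv svc | (sv + svc) * (p.1 + p.2) = τ} =
      {p | p.1 + p.2 = τ / (sv + svc) ∧
        p.1 * p.2 = a + v + sv * (τ / (sv + svc)) + v * (τ / (sv + svc)) ^ 2} := by
  ext p
  have hsum_iff : p.1 + p.2 = τ / (sv + svc) ↔ (sv + svc) * (p.1 + p.2) = τ := by
    rw [eq_div_iff hsc, mul_comm]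
  rw [Set.mem_sep_iff, mem_intersectionPairs_iff hsv, Set.mem_ofPred_eq, hsum_iff]
  constructor
  · rintro ⟨⟨hprod, -⟩, hsum⟩
    refine ⟨hsum, ?_⟩
    rwa [← hsum, mul_div_cancel_left₀ _ hsc]
  · rintro ⟨hsum, hprod⟩
    refine ⟨⟨?_, by rwa [hsum]⟩, hsum⟩
    rwa [← hsum, mul_div_cancel_left₀ _ hsc] at hprod

theorem ncard_intersectionPairs_fiber_of_ne_zero (hsv : sv ^ 2 = v) (hsvc : svc ^ 2 = v + c)
    (hsc : sv + svc ≠ 0) (hτ : τ ^ 2 + τ = a + b + c) (hτ0 : τ ≠ 0) :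
    {p ∈ intersectionPairs a b c v sv svc | (sv + svc) * (p.1 + p.2) = τ}.ncard =
      {z : F | z ^ 2 + z = v + a * c / τ ^ 2}.ncard := by
  set s := τ / (sv + svc)
  have hs : s ≠ 0 := div_ne_zero hτ0 hsc
  have hrhs :
      (a + v + sv * s + v * s ^ 2) / s ^ 2 = v + a * c / τ ^ 2 + ((sv / s) ^ 2 + sv / s) := by
    rw [← sq_add_eq_of_sq_eq_add hsv hsvc, ← hsv]
    simp only [s]
    field_simp
    ring
  rw [intersectionPairs_fiber_eq hsv hsc hτ, ncard_setOf_add_eq_mul_eq_of_ne_zero hs, hrhs,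
    ncard_setOf_sq_add_self_eq_add]

end Field

theorem count_intersection_parameter_pairs_general
    (q r : ℕ) (hq : q = 2 ^ r)
    (F : Type*) [Field F] [Fintype F] (hF : Fintype.card F = q)
    (a b c v : F) (hc : c ≠ 0)
    (sv svc : F) (hsv : sv ^ 2 = v) (hsvc : svc ^ 2 = v + c) :
    ({p : F × F |
        (sv * (p.1 + p.2)) ^ 2 + sv * (p.1 + p.2) + p.1 * p.2 + v = a ∧
        (svc * (p.1 + p.2)) ^ 2 + svc * (p.1 + p.2) + p.1 * p.2 + v + c = b}).ncard =
      ∑ τ ∈ Finset.univ.filter (fun τ : F => τ ^ 2 + τ = a + b + c),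
        (if τ = 0 then 1 else ({z : F | z ^ 2 + z = v + a * c / τ ^ 2}).ncard) := by
  have : CharP F 2 := charP_of_card_eq_prime_pow (hF.trans hq)
  have hsc : sv + svc ≠ 0 := fun h =>
    hc (by rw [← sq_add_eq_of_sq_eq_add hsv hsvc, h, zero_pow two_ne_zero])
  change (intersectionPairs a b c v sv svc).ncard = _
  rw [Set.ncard_eq_sum_ncard_fiber (t := Finset.univ.filter fun τ : F => τ ^ 2 + τ = a + b + c)
    (f := fun p => (sv + svc) * (p.1 + p.2))
    fun p hp => by simpa using ((mem_intersectionPairs_iff hsv p).1 hp).2]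
  refine Finset.sum_congr rfl fun τ hτ => ?_
  replace hτ := (Finset.mem_filter.1 hτ).2
  split_ifs with hτ0
  · subst hτ0
    rw [intersectionPairs_fiber_eq hsv hsc hτ, zero_div]
    exact ncard_setOf_add_eq_zero_mul_eq _
  · exact ncard_intersectionPairs_fiber_of_ne_zero hsv hsvc hsc hτ hτ0

/-- Let `q = 2^r`, `F = F_q`, and `a, b, c ∈ F` with `c ≠ 0` and
`a + b + c` of absolute trace `0` (the absolute trace being `w ↦ ∑_{i<r} w^{2^i}`).
Fix `v ∈ F`, and let `√v`, `√(v+c)` be the square roots of `v` and `v + c`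
(squaring is a bijection in characteristic 2). Then the number of pairs
`(x, y) ∈ F²` satisfying both
`(√v (x+y))² + √v (x+y) + xy + v = a` and `(√(v+c) (x+y))² + √(v+c) (x+y) + xy + v + c = b`
equals `∑_τ |{z ∈ F ∪ {∞} : z² + z = v + ac/τ²}|`, the sum over the two `τ ∈ F` with
`τ² + τ = a + b + c`, with the convention that for `τ = 0` the point `z = ∞` is the
unique solution (contributing `1`). -/
theorem count_intersection_parameter_pairs
    (q r : ℕ) (hr : 0 < r) (hq : q = 2 ^ r)
    (F : Type*) [Field F] [Fintype F] (hF : Fintype.card F = q)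
    (a b c v : F) (hc : c ≠ 0)
    (htr : ∑ i ∈ Finset.range r, (a + b + c) ^ 2 ^ i = 0)
    (sv svc : F) (hsv : sv ^ 2 = v) (hsvc : svc ^ 2 = v + c) :
    ({p : F × F |
        (sv * (p.1 + p.2)) ^ 2 + sv * (p.1 + p.2) + p.1 * p.2 + v = a ∧
        (svc * (p.1 + p.2)) ^ 2 + svc * (p.1 + p.2) + p.1 * p.2 + v + c = b}).ncard =
      ∑ τ ∈ Finset.univ.filter (fun τ : F => τ ^ 2 + τ = a + b + c),
        (if τ = 0 then 1 else ({z : F | z ^ 2 + z = v + a * c / τ ^ 2}).ncard) :=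
  count_intersection_parameter_pairs_general q r hq F hF a b c v hc sv svc hsv hsvc
end

section
/- Let q be a prime power, q − 1 = e·f with e > 1, and let C_0 be the subgroup of F_q^× of index e with −1 ∈ C_0, with cosets C_0, ..., C_{e−1}. For the cyclotomic association scheme with relations R_i = {(x,y) : x − y ∈ C_{i−1}} (1 ≤ i ≤ e), the intersection numbers satisfy, for each j ∈ {1,...,e}, Σ_{k=1}^{e} p_{k j}^{k} = f − 1, where p_{ij}^k = |{z ∈ F_q : x − z ∈ C_{i−1}, y − z ∈ C_{j−1}}| for any fixed (x,y) with x − y ∈ C_{k−1}. In particular the cyclotomic scheme is pseudocyclic. -/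
/-!
If `d = x - y` lies in the class `C_k`, the substitution `z = x - d v` maps
`{v ∈ C_0 : v - 1 ∈ C_{j-k}}` bijectively onto the set counted by `p_{kj}^k`. As `k` runs
over `0, …, e - 1` the classes `C_{j-k}` run once over all cosets of `C_0`, which partition
`Fˣ`, so the counts add up to `|C_0 \ {1}| = f - 1`.
-/

open Finset Subgroup Function

theorem forall_mem_zpowers_map_of_surjective {G H : Type*} [Group G] [Group H] {g : G}
    (hg : ∀ x : G, x ∈ zpowers g) {φ : G →* H} (hφ : Surjective φ) (y : H) :
    y ∈ zpowers (φ g) := by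
  obtain ⟨w, rfl⟩ := hφ y
  obtain ⟨m, rfl⟩ := hg w
  exact ⟨m, (map_zpow φ g m).symm⟩

theorem Finset.sum_range_orderOf_pow {G M : Type*} [Group G] [Fintype G] [AddCommMonoid M]
    {a : G} (ha : ∀ x : G, x ∈ zpowers a) (φ : G → M) :
    ∑ k ∈ range (orderOf a), φ (a ^ k) = ∑ c, φ c := by
  classical
  rw [← sum_image fun _ hk _ hl h => pow_injOn_Iio_orderOf (mem_range.1 hk) (mem_range.1 hl) h,
    IsCyclic.image_range_orderOf ha]

namespace CyclotomicScheme

variable {F : Type*} [Field F] (C : Subgroup Fˣ)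

def cyclotomicClass (a : Fˣ ⧸ C) : Set F :=
  Units.val '' ((QuotientGroup.mk : Fˣ → Fˣ ⧸ C) ⁻¹' {a})

variable {C}

theorem val_mem_cyclotomicClass {u : Fˣ} {a : Fˣ ⧸ C} :
    (u : F) ∈ cyclotomicClass C a ↔ (u : Fˣ ⧸ C) = a :=
  Units.val_injective.mem_set_image

theorem ne_zero_of_mem_cyclotomicClass {w : F} {a : Fˣ ⧸ C} (hw : w ∈ cyclotomicClass C a) :
    w ≠ 0 := by
  obtain ⟨u, -, rfl⟩ := hw
  exact u.ne_zero

theorem setOf_mul_mem_eq_cyclotomicClass (h : Fˣ) :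
    {x : F | ∃ u ∈ C, x = h * u} = cyclotomicClass C h := by
  ext x
  constructor
  · rintro ⟨u, hu, rfl⟩
    exact ⟨h * u, QuotientGroup.mk_mul_of_mem h hu, rfl⟩
  · rintro ⟨v, hv, rfl⟩
    exact ⟨h⁻¹ * v, QuotientGroup.eq.1 hv.symm, by simp⟩

theorem mul_mem_cyclotomicClass_iff (d : Fˣ) {w : F} {a : Fˣ ⧸ C} :
    (d : F) * w ∈ cyclotomicClass C a ↔ w ∈ cyclotomicClass C ((d : Fˣ ⧸ C)⁻¹ * a) := by
  by_cases hw : w = 0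
  · simp only [hw, mul_zero]
    exact iff_of_false (fun h => ne_zero_of_mem_cyclotomicClass h rfl)
      (fun h => ne_zero_of_mem_cyclotomicClass h rfl)
  · lift w to Fˣ using IsUnit.mk0 w hw
    rw [← Units.val_mul, val_mem_cyclotomicClass, val_mem_cyclotomicClass, QuotientGroup.mk_mul,
      eq_inv_mul_iff_mul_eq]

theorem ncard_cyclotomicClass [Finite F] (a : Fˣ ⧸ C) :
    (cyclotomicClass C a).ncard = Nat.card C := by
  rw [cyclotomicClass, Set.ncard_image_of_injective _ Units.val_injective, ← Nat.card_coe_set_eq,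
    QuotientGroup.card_preimage_mk, Nat.card_unique (α := ({a} : Set _)), mul_one]

theorem disjoint_cyclotomicClass {a b : Fˣ ⧸ C} (hab : a ≠ b) :
    Disjoint (cyclotomicClass C a) (cyclotomicClass C b) := by
  rw [Set.disjoint_left]
  rintro _ ⟨u, hu, rfl⟩ hb
  exact hab (hu.symm.trans (val_mem_cyclotomicClass.1 hb))

theorem iUnion_cyclotomicClass : ⋃ a, cyclotomicClass C a = {0}ᶜ := by
  ext w
  refine ⟨fun hw => ?_, fun hw => ?_⟩
  · obtain ⟨a, ha⟩ := Set.mem_iUnion.1 hw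
    exact ne_zero_of_mem_cyclotomicClass ha
  · lift w to Fˣ using IsUnit.mk0 w hw
    exact Set.mem_iUnion.2 ⟨w, val_mem_cyclotomicClass.2 rfl⟩

variable (C)

/-- The intersection number `p_{kj}^k` of the cyclotomic scheme is this number for
`c = C_{j-k}`. -/
noncomputable def cyclotomicNumber (c : Fˣ ⧸ C) : ℕ :=
  {v : F | v ∈ cyclotomicClass C 1 ∧ v - 1 ∈ cyclotomicClass C c}.ncard

theorem ncard_setOf_sub_mem_cyclotomicClass {x y : F} {a : Fˣ ⧸ C}
    (hxy : x - y ∈ cyclotomicClass C a) (b : Fˣ ⧸ C) :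
    {z : F | x - z ∈ cyclotomicClass C a ∧ y - z ∈ cyclotomicClass C b}.ncard =
      cyclotomicNumber C (a⁻¹ * b) := by
  obtain ⟨d, hda, hd⟩ := hxy
  rw [Set.mem_preimage, Set.mem_singleton_iff] at hda
  subst hda
  have hpre : {v : F | v ∈ cyclotomicClass C 1 ∧
        v - 1 ∈ cyclotomicClass C ((d : Fˣ ⧸ C)⁻¹ * b)} =
      (fun v => x - d * v) ⁻¹'
        {z : F | x - z ∈ cyclotomicClass C d ∧ y - z ∈ cyclotomicClass C b} := by
    ext v
    have hy : y - (x - d * v) = d * (v - 1) := by linear_combination hd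
    simp only [Set.mem_preimage, Set.mem_ofPred_eq, sub_sub_cancel, hy,
      mul_mem_cyclotomicClass_iff, inv_mul_cancel]
  rw [cyclotomicNumber, hpre, Set.ncard_preimage_of_injective_subset_range]
  · exact fun v w h => mul_left_cancel₀ d.ne_zero (sub_right_injective h)
  · exact fun z _ => ⟨d⁻¹ * (x - z), by simp⟩

theorem sum_cyclotomicNumber [Finite F] [Fintype (Fˣ ⧸ C)] :
    ∑ c, cyclotomicNumber C c = Nat.card C - 1 := by
  have hunion : ⋃ c, {v : F | v ∈ cyclotomicClass C 1 ∧ v - 1 ∈ cyclotomicClass C c} =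
      cyclotomicClass C 1 \ {1} := by
    ext v
    simp only [Set.mem_iUnion, Set.mem_ofPred_eq, exists_and_left, Set.mem_sdiff,
      Set.mem_singleton_iff, ← Set.mem_iUnion (s := fun c => cyclotomicClass C c),
      iUnion_cyclotomicClass, Set.mem_compl_singleton_iff, sub_ne_zero]
  have hdisj : Pairwise (Disjoint on fun c : Fˣ ⧸ C =>
      {v : F | v ∈ cyclotomicClass C 1 ∧ v - 1 ∈ cyclotomicClass C c}) :=
    fun a b hab => Set.disjoint_left.2 fun v hva hvb =>
      Set.disjoint_left.1 (disjoint_cyclotomicClass hab) hva.2 hvb.2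
  have h1 : (1 : F) ∈ cyclotomicClass C 1 := val_mem_cyclotomicClass.2 rfl
  rw [← ncard_cyclotomicClass (C := C) 1, ← Set.ncard_sdiff_singleton_of_mem h1, ← hunion,
    Set.ncard_iUnion_of_finite (fun _ => Set.toFinite _) hdisj, finsum_eq_sum_of_fintype]
  rfl

end CyclotomicScheme

open CyclotomicScheme in
theorem cyclotomic_scheme_pseudocyclic_general
    (q e f : ℕ)
    (hef : q - 1 = e * f)
    (F : Type*) [Field F] [Fintype F] (hF : Fintype.card F = q)
    (g : Fˣ) (hg : ∀ x : Fˣ, x ∈ Subgroup.zpowers g)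
    (C : Subgroup Fˣ) (hC : C.index = e)
    (Cset : ℕ → Set F)
    (hCset : ∀ i, Cset i = {x : F | ∃ u ∈ C, x = (g : F) ^ i * (u : F)})
    (j : ℕ)
    (x y : ℕ → F) (hxy : ∀ k < e, x k - y k ∈ Cset k) :
    (∀ k < e, (Cset k).ncard = f) ∧
    ∑ k ∈ Finset.range e,
        ({z : F | x k - z ∈ Cset k ∧ y k - z ∈ Cset j}).ncard = f - 1 := by
  classical
  have hclass (i : ℕ) : Cset i = cyclotomicClass C ((g : Fˣ ⧸ C) ^ i) := by
    rw [hCset, ← Units.val_pow_eq_pow_val, setOf_mul_mem_eq_cyclotomicClass, QuotientGroup.mk_pow]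
  have hcardC : Nat.card C = f := by
    have h := C.card_mul_index
    rw [hC, Nat.card_units, Nat.card_eq_fintype_card (α := F), hF, hef, mul_comm e] at h
    exact Nat.eq_of_mul_eq_mul_right (Nat.pos_of_ne_zero (hC ▸ C.index_ne_zero_of_finite)) h
  have hgen : ∀ a : Fˣ ⧸ C, a ∈ zpowers (g : Fˣ ⧸ C) :=
    forall_mem_zpowers_map_of_surjective hg (QuotientGroup.mk'_surjective C)
  have horder : orderOf (g : Fˣ ⧸ C) = e := by
    rw [orderOf_eq_card_of_forall_mem_zpowers hgen, ← hC, Subgroup.index]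
  refine ⟨fun k _ => by rw [hclass, ncard_cyclotomicClass, hcardC], ?_⟩
  calc ∑ k ∈ range e, {z : F | x k - z ∈ Cset k ∧ y k - z ∈ Cset j}.ncard
      = ∑ k ∈ range e, cyclotomicNumber C (((g : Fˣ ⧸ C) ^ k)⁻¹ * (g : Fˣ ⧸ C) ^ j) :=
        sum_congr rfl fun k hk => by
          rw [hclass, hclass]
          exact ncard_setOf_sub_mem_cyclotomicClass C (hclass k ▸ hxy k (mem_range.1 hk)) _
    _ = ∑ c, cyclotomicNumber C (c⁻¹ * (g : Fˣ ⧸ C) ^ j) := by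
        rw [← horder]
        exact sum_range_orderOf_pow hgen fun c => cyclotomicNumber C (c⁻¹ * _)
    _ = f - 1 := by
        rw [Fintype.sum_equiv ((Equiv.inv _).trans (Equiv.mulRight _))
            (fun c => cyclotomicNumber C (c⁻¹ * (g : Fˣ ⧸ C) ^ j)) _ fun _ => rfl,
          sum_cyclotomicNumber, hcardC]

/-- Let `q` be a prime power, `q − 1 = e·f` with `e > 1`, and let
`C ≤ F_qˣ` be the subgroup of index `e` with `−1 ∈ C`, with cosets
`Cset i = g^i · C` (0-based; `g` a generator of `F_qˣ`). For the cyclotomic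
association scheme with relations `R_i = {(x,y) : x − y ∈ Cset (i−1)}`, all
nontrivial valencies equal `f`, and for each `j < e` the intersection numbers
satisfy `∑_{k<e} p_{k j}^{k} = f − 1`, where for any choice of `(x_k, y_k)` with
`x_k − y_k ∈ Cset k`, `p_{kj}^k = |{z : x_k − z ∈ Cset k ∧ y_k − z ∈ Cset j}|`.
In particular the cyclotomic scheme is pseudocyclic. -/
theorem cyclotomic_scheme_pseudocyclic
    (q e f : ℕ) (hq : ∃ p n : ℕ, p.Prime ∧ 0 < n ∧ q = p ^ n)
    (he : 1 < e) (hef : q - 1 = e * f)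
    (F : Type*) [Field F] [Fintype F] (hF : Fintype.card F = q)
    (g : Fˣ) (hg : ∀ x : Fˣ, x ∈ Subgroup.zpowers g)
    (C : Subgroup Fˣ) (hC : C.index = e) (hC1 : (-1 : Fˣ) ∈ C)
    (Cset : ℕ → Set F)
    (hCset : ∀ i, Cset i = {x : F | ∃ u ∈ C, x = (g : F) ^ i * (u : F)})
    (j : ℕ) (hj : j < e)
    (x y : ℕ → F) (hxy : ∀ k < e, x k - y k ∈ Cset k) :
    (∀ k < e, (Cset k).ncard = f) ∧
    ∑ k ∈ Finset.range e,
        ({z : F | x k - z ∈ Cset k ∧ y k - z ∈ Cset j}).ncard = f - 1 :=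
  cyclotomic_scheme_pseudocyclic_general q e f hef F hF g hg C hC Cset hCset j x y hxy
end
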